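/- arXiv:2210.01095 — 4 statements merged into one kernel-verified Lean document; each statement's English description precedes it below -/
import Mathlib

section
/- Let (Z,d,ν) be a compact metric measure space, 0 < diam(Z) < 1, with ν Ahlfors Q-regular for some Q > 0. Let 1 < p < ∞ and 0 < θ < 1 with pθ = Q. Then there exist constants c > 0 and C₀ > 2 (depending only on p, θ, Q and the Ahlfors regularity constant of ν) such that for every x₀ ∈ Z and all radii 0 < r ≤ R/2 with R < diam(Z)/(4C₀), the relative Besov capacity satisfies cp_{B^θ_{p,p}(Z)}(B̄(x₀,r), Z \ B(x₀,R)) ≥ c · (log(R/r))^{1−p}. -/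
open MeasureTheory Metric Set
open scoped ENNReal

/-- The Besov energy `‖u‖^p_{B^θ_{p,p}}` of a function `u` on a metric measure space. -/
noncomputable def besovEnergy {Z : Type*} [MetricSpace Z] [MeasurableSpace Z]
    (ν : Measure Z) (θ p : ℝ) (u : Z → ℝ) : ℝ≥0∞ :=
  ∫⁻ x, ∫⁻ z,
    ENNReal.ofReal (|u x - u z| ^ p / dist x z ^ (θ * p)) / ν (ball x (dist x z)) ∂ν ∂ν

/-- `u` belongs to the Besov space `B^θ_{p,p}`: it is in `L^p` and has finite Besov energy. -/
def MemBesov {Z : Type*} [MetricSpace Z] [MeasurableSpace Z]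
    (ν : Measure Z) (θ p : ℝ) (u : Z → ℝ) : Prop :=
  MemLp u (ENNReal.ofReal p) ν ∧ besovEnergy ν θ p u < ⊤

/-- The relative Besov capacity of the condenser `(E, F)`. -/
noncomputable def besovCapacity {Z : Type*} [MetricSpace Z] [MeasurableSpace Z]
    (ν : Measure Z) (θ p : ℝ) (E F : Set Z) : ℝ≥0∞ :=
  ⨅ (u : Z → ℝ) (_ : MemBesov ν θ p u)
    (_ : ∃ U, IsOpen U ∧ E ⊆ U ∧ ∀ x ∈ U, 1 ≤ u x)
    (_ : ∃ V, IsOpen V ∧ F ⊆ V ∧ ∀ x ∈ V, u x ≤ 0),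
    besovEnergy ν θ p u

/-- `ν` is Ahlfors `Q`-regular with constant `C`. -/
def IsAhlforsRegular {Z : Type*} [MetricSpace Z] [MeasurableSpace Z]
    (ν : Measure Z) (Q C : ℝ) : Prop :=
  1 ≤ C ∧ ∀ (x : Z) (r : ℝ), 0 < r → r < 2 * Metric.diam (Set.univ : Set Z) →
    ENNReal.ofReal (r ^ Q / C) ≤ ν (ball x r) ∧ ν (ball x r) ≤ ENNReal.ofReal (C * r ^ Q)

/-! ### Auxiliary lemmas -/

lemma besov_holder_set {α : Type*} [MeasurableSpace α] (μ : Measure α) {p q : ℝ}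
    (hpq : Real.HolderConjugate p q) {f : α → ℝ≥0∞} (s : Set α)
    (hf : AEMeasurable f (μ.restrict s)) :
    ∫⁻ x in s, f x ∂μ ≤ (∫⁻ x in s, f x ^ p ∂μ) ^ (1/p) * (μ s) ^ (1/q) := by
  have h := ENNReal.lintegral_mul_le_Lp_mul_Lq (μ.restrict s) hpq hf
    (aemeasurable_const (b := (1:ℝ≥0∞)))
  simpa [ENNReal.one_rpow, lintegral_one, Measure.restrict_apply_univ] using h

lemma besov_sum_rpow_lower {n : ℕ} (hn : 0 < n) {p : ℝ} (hp : 1 ≤ p) (d : ℕ → ℝ)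
    (hd : ∀ j, 0 ≤ d j) (h1 : 1 ≤ ∑ j ∈ Finset.range n, d j) :
    (n:ℝ) ^ (1-p) ≤ ∑ j ∈ Finset.range n, d j ^ p := by
  have hn0 : (0:ℝ) < n := by exact_mod_cast hn
  have hw : ∑ _j ∈ Finset.range n, (n:ℝ)⁻¹ = 1 := by
    simp [Finset.sum_const, mul_comm]
    field_simp
  have key := Real.rpow_arith_mean_le_arith_mean_rpow (Finset.range n)
    (fun _ => (n:ℝ)⁻¹) d (fun i _ => by positivity) hw (fun i _ => hd i) hp
  rw [← Finset.mul_sum, ← Finset.mul_sum] at key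
  have h2 : ((n:ℝ)⁻¹) ^ p ≤ ((n:ℝ)⁻¹ * ∑ j ∈ Finset.range n, d j) ^ p := by
    apply Real.rpow_le_rpow (by positivity)
    · nlinarith [inv_pos.mpr hn0]
    · linarith
  have h3 : ((n:ℝ)⁻¹) ^ p ≤ (n:ℝ)⁻¹ * ∑ j ∈ Finset.range n, d j ^ p := le_trans h2 key
  have h4 : (n:ℝ) ^ (1-p) = (n:ℝ) * ((n:ℝ)⁻¹) ^ p := by
    rw [Real.inv_rpow hn0.le, Real.rpow_sub hn0, Real.rpow_one, div_eq_mul_inv]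
  rw [h4]
  calc (n:ℝ) * ((n:ℝ)⁻¹) ^ p ≤ (n:ℝ) * ((n:ℝ)⁻¹ * ∑ j ∈ Finset.range n, d j ^ p) :=
        by apply mul_le_mul_of_nonneg_left h3 hn0.le
    _ = ∑ j ∈ Finset.range n, d j ^ p := by field_simp

lemma besov_sum_restrict_le {α : Type*} [MeasurableSpace α] (μ : Measure α) (S : ℕ → Set α)
    (n : ℕ) (hS : ∀ j, MeasurableSet (S j))
    (hd : ∀ i < n, ∀ j < n, i ≠ j → Disjoint (S i) (S j)) :
    (∑ j ∈ Finset.range n, μ.restrict (S j)) ≤ μ := by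
  refine Measure.le_iff.mpr (fun t ht => ?_)
  rw [Measure.coe_finset_sum, Finset.sum_apply]
  have : ∀ j ∈ Finset.range n, μ.restrict (S j) t = μ (t ∩ S j) := fun j _ =>
    Measure.restrict_apply ht
  rw [Finset.sum_congr rfl this]
  rw [← measure_biUnion_finset (fun i hi j hj hij =>
      (((hd i (Finset.mem_range.mp hi) j (Finset.mem_range.mp hj) hij).inter_left' t).inter_right' t))
    (fun j _ => (ht.inter (hS j)))]
  exact measure_mono (by simp [Set.iUnion_subset_iff, Set.inter_subset_left])

lemma besov_annulus_lower {Z : Type*} [MetricSpace Z] [MeasurableSpace Z]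
    (ν : Measure Z) (Q CA : ℝ)
    (hreg : IsAhlforsRegular ν Q CA) {lam : ℝ}
    (hlam2 : 2 ≤ lam) (hlamQ : 2^(Q+1) * CA^2 ≤ lam ^ Q) (x₀ : Z) {s : ℝ} (hs : 0 < s)
    (h2 : lam * s < 2 * Metric.diam (Set.univ : Set Z)) :
    ENNReal.ofReal ((lam*s)^Q / (2*CA)) ≤ ν (ball x₀ (lam*s) \ closedBall x₀ s) := by
  have hCA : 1 ≤ CA := hreg.1
  have hCA0 : 0 < CA := lt_of_lt_of_le one_pos hCA
  have hls : 0 < lam * s := by nlinarith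
  have h2s : 2 * s < 2 * Metric.diam (Set.univ : Set Z) := by nlinarith
  have hlow := (hreg.2 x₀ (lam*s) hls h2).1
  have hup := (hreg.2 x₀ (2*s) (by linarith) h2s).2
  have hsub : closedBall x₀ s ⊆ ball x₀ (2*s) := closedBall_subset_ball (by linarith)
  have hcover : ball x₀ (lam*s) ⊆ (ball x₀ (lam*s) \ closedBall x₀ s) ∪ ball x₀ (2*s) := by
    intro y hy
    by_cases h : y ∈ closedBall x₀ s
    · exact Or.inr (hsub h)
    · exact Or.inl ⟨hy, h⟩
  have hm : ν (ball x₀ (lam*s)) ≤ ν (ball x₀ (lam*s) \ closedBall x₀ s) + ν (ball x₀ (2*s)) :=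
    le_trans (measure_mono hcover) (measure_union_le _ _)
  have key : ENNReal.ofReal ((lam*s)^Q / CA) ≤
      ν (ball x₀ (lam*s) \ closedBall x₀ s) + ENNReal.ofReal (CA * (2*s)^Q) :=
    le_trans hlow (le_trans hm (add_le_add le_rfl hup))
  have hQ' : (0:ℝ) < Q ∨ True := Or.inr trivial
  have hreal : (lam*s)^Q / (2*CA) ≤ (lam*s)^Q / CA - CA * (2*s)^Q := by
    have e1 : (lam*s)^Q = lam^Q * s^Q := Real.mul_rpow (by linarith) hs.le
    have e2 : (2*s)^Q = 2^Q * s^Q := Real.mul_rpow (by norm_num) hs.le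
    have e3 : (2:ℝ)^(Q+1) = 2^Q * 2 := by
      rw [Real.rpow_add (by norm_num), Real.rpow_one]
    have hsQ : (0:ℝ) < s^Q := Real.rpow_pos_of_pos hs Q
    have h2Q : (0:ℝ) < 2^Q := Real.rpow_pos_of_pos (by norm_num) Q
    rw [e1, e2, div_sub' (ne_of_gt hCA0), div_le_div_iff₀ (by positivity) hCA0]
    rw [e3] at hlamQ
    nlinarith [mul_nonneg (mul_nonneg (sub_nonneg.mpr hlamQ) hsQ.le) hCA0.le]
  calc ENNReal.ofReal ((lam*s)^Q / (2*CA))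
      ≤ ENNReal.ofReal ((lam*s)^Q / CA - CA * (2*s)^Q) := ENNReal.ofReal_le_ofReal hreal
    _ = ENNReal.ofReal ((lam*s)^Q / CA) - ENNReal.ofReal (CA * (2*s)^Q) :=
        ENNReal.ofReal_sub _ (by positivity)
    _ ≤ ν (ball x₀ (lam*s) \ closedBall x₀ s) := tsub_le_iff_right.mpr key

lemma besov_finite_of_ahlfors {Z : Type*} [MetricSpace Z] [MeasurableSpace Z] [CompactSpace Z]
    (ν : Measure Z) (Q CA : ℝ) (hreg : IsAhlforsRegular ν Q CA)
    (hdiam0 : 0 < Metric.diam (Set.univ : Set Z)) : IsFiniteMeasure ν := by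
  have hne : Nonempty Z := by
    by_contra h
    rw [not_nonempty_iff] at h
    rw [Set.univ_eq_empty_iff.mpr h] at hdiam0
    simp [Metric.diam_empty] at hdiam0
  obtain ⟨x⟩ := hne
  set D := Metric.diam (Set.univ : Set Z)
  have hsub : (Set.univ : Set Z) ⊆ ball x (1.5 * D) := by
    intro y _
    have : dist y x ≤ D := Metric.dist_le_diam_of_mem (isCompact_univ.isBounded) trivial trivial
    simp only [mem_ball]
    nlinarith
  have h := (hreg.2 x (1.5*D) (by nlinarith) (by nlinarith)).2
  refine ⟨?_⟩
  calc ν Set.univ ≤ ν (ball x (1.5*D)) := measure_mono hsub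
    _ ≤ ENNReal.ofReal (CA * (1.5*D)^Q) := h
    _ < ⊤ := ENNReal.ofReal_lt_top

lemma besov_abs_mean_sub_le {Z : Type*} [MeasurableSpace Z] (ν : Measure Z) [IsFiniteMeasure ν]
    (g : Z → ℝ) (hg : Integrable g ν) (A : Set Z) (c : ℝ) (hA0 : ν A ≠ 0) :
    ENNReal.ofReal |(∫ x in A, g x ∂ν) / (ν A).toReal - c| ≤
      (ν A)⁻¹ * ∫⁻ x in A, ENNReal.ofReal |g x - c| ∂ν := by
  have hAfin : ν A ≠ ⊤ := measure_ne_top ν A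
  have htA : 0 < (ν A).toReal := ENNReal.toReal_pos hA0 hAfin
  have hgr : Integrable g (ν.restrict A) := hg.restrict
  have hint : Integrable (fun x => g x - c) (ν.restrict A) := hgr.sub (integrable_const c)
  have e : ∫ x in A, (g x - c) ∂ν = (∫ x in A, g x ∂ν) - (ν A).toReal * c := by
    rw [integral_sub hgr (integrable_const c), setIntegral_const, smul_eq_mul]
    rfl
  have e2 : (∫ x in A, g x ∂ν) / (ν A).toReal - c = (∫ x in A, (g x - c) ∂ν) / (ν A).toReal := by
    rw [e]; field_simp
  have habs : |(∫ x in A, g x ∂ν) / (ν A).toReal - c| ≤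
      (∫ x in A, |g x - c| ∂ν) / (ν A).toReal := by
    rw [e2, abs_div, abs_of_pos htA]
    gcongr
    calc |∫ x in A, (g x - c) ∂ν| = ‖∫ x in A, (g x - c) ∂ν‖ := (Real.norm_eq_abs _).symm
      _ ≤ ∫ x in A, ‖g x - c‖ ∂ν := norm_integral_le_integral_norm _
      _ = ∫ x in A, |g x - c| ∂ν := by simp [Real.norm_eq_abs]
  have hconv : ENNReal.ofReal ((∫ x in A, |g x - c| ∂ν) / (ν A).toReal) =
      (ν A)⁻¹ * ∫⁻ x in A, ENNReal.ofReal |g x - c| ∂ν := by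
    rw [ENNReal.ofReal_div_of_pos htA,
      ofReal_integral_eq_lintegral_ofReal hint.abs
        (Filter.Eventually.of_forall fun x => abs_nonneg _),
      ENNReal.ofReal_toReal hAfin, div_eq_mul_inv, mul_comm]
  exact (ENNReal.ofReal_le_ofReal habs).trans_eq hconv

lemma besov_chain_step {Z : Type*} [MeasurableSpace Z] (ν : Measure Z) [IsFiniteMeasure ν]
    (g : Z → ℝ) (hgm : Measurable g) (hg : Integrable g ν) (A B : Set Z)
    (hA0 : ν A ≠ 0) (hB0 : ν B ≠ 0) {p q : ℝ}
    (hpq : Real.HolderConjugate p q) :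
    (ENNReal.ofReal |(∫ x in A, g x ∂ν) / (ν A).toReal
        - (∫ z in B, g z ∂ν) / (ν B).toReal|) ^ p ≤
      (ν A)⁻¹ * (ν B)⁻¹ *
        ∫⁻ x in A, ∫⁻ z in B, (ENNReal.ofReal |g x - g z|) ^ p ∂ν ∂ν := by
  set a := ν A with ha
  set b := ν B with hb
  have haT : a ≠ ⊤ := measure_ne_top ν A
  have hbT : b ≠ ⊤ := measure_ne_top ν B
  set mB := (∫ z in B, g z ∂ν) / (ν B).toReal with hmB
  set I := ∫⁻ x in A, ∫⁻ z in B, ENNReal.ofReal |g x - g z| ∂ν ∂ν with hI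
  set J := ∫⁻ x in A, ∫⁻ z in B, (ENNReal.ofReal |g x - g z|) ^ p ∂ν ∂ν with hJ
  have h2 : ∀ x, ENNReal.ofReal |g x - mB| ≤ b⁻¹ * ∫⁻ z in B, ENNReal.ofReal |g x - g z| ∂ν := by
    intro x
    have := besov_abs_mean_sub_le ν g hg B (g x) hB0
    rw [abs_sub_comm]
    simpa [abs_sub_comm (g x)] using this
  have hId : ENNReal.ofReal |(∫ x in A, g x ∂ν) / (ν A).toReal - mB| ≤ a⁻¹ * (b⁻¹ * I) := by
    refine le_trans (besov_abs_mean_sub_le ν g hg A mB hA0) ?_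
    gcongr
    calc ∫⁻ x in A, ENNReal.ofReal |g x - mB| ∂ν
        ≤ ∫⁻ x in A, b⁻¹ * ∫⁻ z in B, ENNReal.ofReal |g x - g z| ∂ν ∂ν :=
          lintegral_mono fun x => h2 x
      _ = b⁻¹ * I := lintegral_const_mul' _ _ (by simp [hB0])
  have hFm : ∀ x, Measurable fun z => ENNReal.ofReal |g x - g z| := fun x =>
    ((measurable_const.sub hgm).abs).ennreal_ofReal
  have hGm : Measurable fun x => ∫⁻ z in B, (ENNReal.ofReal |g x - g z|) ^ p ∂ν := by
    apply Measurable.lintegral_prod_right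
    exact (((hgm.comp measurable_fst).sub (hgm.comp measurable_snd)).abs.ennreal_ofReal).pow_const _
  have hinner : ∀ x, ∫⁻ z in B, ENNReal.ofReal |g x - g z| ∂ν ≤
      (∫⁻ z in B, (ENNReal.ofReal |g x - g z|) ^ p ∂ν) ^ (1/p) * b ^ (1/q) := fun x =>
    besov_holder_set ν hpq B (hFm x).aemeasurable
  have houter : I ≤ (J ^ (1/p) * a ^ (1/q)) * b ^ (1/q) := by
    calc I ≤ ∫⁻ x in A, (∫⁻ z in B, (ENNReal.ofReal |g x - g z|) ^ p ∂ν) ^ (1/p) * b ^ (1/q) ∂ν :=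
          lintegral_mono fun x => hinner x
      _ = (∫⁻ x in A, (∫⁻ z in B, (ENNReal.ofReal |g x - g z|) ^ p ∂ν) ^ (1/p) ∂ν) * b ^ (1/q) :=
          lintegral_mul_const' _ _
            (ENNReal.rpow_ne_top_of_nonneg (le_of_lt (by simp [hpq.symm.pos])) hbT)
      _ ≤ ((∫⁻ x in A, ((∫⁻ z in B, (ENNReal.ofReal |g x - g z|) ^ p ∂ν) ^ (1/p)) ^ p ∂ν) ^ (1/p)
            * a ^ (1/q)) * b ^ (1/q) := by
          gcongr
          exact besov_holder_set ν hpq A (hGm.pow_const _).aemeasurable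
      _ = (J ^ (1/p) * a ^ (1/q)) * b ^ (1/q) := by
          congr 2
          refine congrArg (· ^ (1/p)) (lintegral_congr fun x => ?_)
          rw [← ENNReal.rpow_mul, one_div, inv_mul_cancel₀ hpq.ne_zero, ENNReal.rpow_one]
  have hp0 : (0:ℝ) < p := hpq.pos
  have hd : ENNReal.ofReal |(∫ x in A, g x ∂ν) / (ν A).toReal - mB| ≤
      J ^ (1/p) * (a⁻¹ * a ^ (1/q)) * (b⁻¹ * b ^ (1/q)) := by
    refine hId.trans ?_
    calc a⁻¹ * (b⁻¹ * I) ≤ a⁻¹ * (b⁻¹ * ((J ^ (1/p) * a ^ (1/q)) * b ^ (1/q))) := by gcongr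
      _ = J ^ (1/p) * (a⁻¹ * a ^ (1/q)) * (b⁻¹ * b ^ (1/q)) := by ring
  have key := ENNReal.rpow_le_rpow hd hp0.le
  refine key.trans_eq ?_
  have hsplit : ∀ (c : ℝ≥0∞), c ≠ 0 → c ≠ ⊤ → (c⁻¹ * c ^ (1/q)) ^ p = c⁻¹ := by
    intro c hc0 hcT
    rw [← ENNReal.rpow_neg_one c, ← ENNReal.rpow_add _ _ hc0 hcT, ← ENNReal.rpow_mul]
    have : (-1 + 1/q) * p = -1 := by
      have h1 : p⁻¹ + q⁻¹ = 1 := hpq.inv_add_inv_eq_one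
      have hpne : p ≠ 0 := hpq.ne_zero
      have hqne : q ≠ 0 := hpq.symm.ne_zero
      field_simp at h1 ⊢
      nlinarith [h1]
    rw [this, ENNReal.rpow_neg_one]
  rw [ENNReal.mul_rpow_of_nonneg _ _ hp0.le, ENNReal.mul_rpow_of_nonneg _ _ hp0.le,
    ← ENNReal.rpow_mul, one_div, inv_mul_cancel₀ hpq.ne_zero, ENNReal.rpow_one,
    hsplit a hA0 haT, hsplit b hB0 hbT]
  ring

lemma besov_pointwise_dom {Z : Type*} [MetricSpace Z] [MeasurableSpace Z]
    (ν : Measure Z) (Q CA p θ : ℝ) [CompactSpace Z]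
    (hdiam0 : 0 < Metric.diam (Set.univ : Set Z))
    (hreg : IsAhlforsRegular ν Q CA) (hQ : 0 < Q) (hp : 0 < p) (hθp : θ * p = Q)
    (g : Z → ℝ) (x₀ : Z) {ρ₁ ρ₂ D : ℝ} (hρ₁ : 0 < ρ₁) (hρ : ρ₁ ≤ ρ₂) (hD : D = 2 * ρ₂)
    (hD2 : D < 2 * Metric.diam (Set.univ : Set Z))
    {x z : Z} (hx : x ∈ closedBall x₀ ρ₁) (hz1 : z ∈ closedBall x₀ ρ₂)
    (hz2 : z ∉ closedBall x₀ ρ₁) :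
    (ENNReal.ofReal |g x - g z|) ^ p ≤
      (ENNReal.ofReal (|g x - g z| ^ p / dist x z ^ (θ * p)) / ν (ball x (dist x z))) *
        (ENNReal.ofReal (CA * D ^ Q) * ENNReal.ofReal (D ^ Q)) := by
  have hCA : 1 ≤ CA := hreg.1
  have hCA0 : (0:ℝ) < CA := lt_of_lt_of_le one_pos hCA
  set d := dist x z with hd
  have hd0 : 0 < d := by
    rw [hd, dist_pos]
    rintro rfl
    exact hz2 hx
  have hdD : d ≤ D := by
    rw [hd, hD]
    have h1 : dist x x₀ ≤ ρ₁ := mem_closedBall.mp hx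
    have h2 : dist x₀ z ≤ ρ₂ := by
      have := mem_closedBall.mp hz1; rwa [dist_comm]
    calc dist x z ≤ dist x x₀ + dist x₀ z := dist_triangle _ _ _
      _ ≤ 2 * ρ₂ := by linarith
  have hD0 : 0 < D := by rw [hD]; linarith
  have hddiam : d < 2 * Metric.diam (Set.univ : Set Z) := by
    have : d ≤ Metric.diam (Set.univ : Set Z) :=
      Metric.dist_le_diam_of_mem isCompact_univ.isBounded trivial trivial
    linarith
  have hlow := (hreg.2 x d hd0 hddiam).1
  have hup : ν (ball x d) ≤ ENNReal.ofReal (CA * D ^ Q) :=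
    le_trans (measure_mono (ball_subset_ball hdD)) (hreg.2 x D hD0 hD2).2
  have hb0 : ν (ball x d) ≠ 0 := by
    refine fun h => absurd (h ▸ hlow) ?_
    simp only [nonpos_iff_eq_zero, ENNReal.ofReal_eq_zero, not_le]
    positivity
  have hbT : ν (ball x d) ≠ ⊤ := (lt_of_le_of_lt hup ENNReal.ofReal_lt_top).ne
  have hdQ : d ^ (θ * p) ≤ D ^ Q := by
    rw [hθp]
    exact Real.rpow_le_rpow hd0.le hdD hQ.le
  have e1 : ENNReal.ofReal (|g x - g z| ^ p) =
      ENNReal.ofReal (|g x - g z| ^ p / d ^ (θ * p)) * ENNReal.ofReal (d ^ (θ * p)) := by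
    rw [← ENNReal.ofReal_mul (by positivity),
      div_mul_cancel₀ _ (ne_of_gt (Real.rpow_pos_of_pos hd0 _))]
  have e3 : ENNReal.ofReal (|g x - g z| ^ p / d ^ (θ * p)) =
      (ENNReal.ofReal (|g x - g z| ^ p / d ^ (θ * p)) / ν (ball x d)) * ν (ball x d) :=
    (ENNReal.div_mul_cancel hb0 hbT).symm
  have e4 : ENNReal.ofReal (|g x - g z| ^ p / d ^ (θ * p)) * ENNReal.ofReal (d ^ (θ * p)) =
      (ENNReal.ofReal (|g x - g z| ^ p / d ^ (θ * p)) / ν (ball x d)) *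
        (ν (ball x d) * ENNReal.ofReal (d ^ (θ * p))) := by
    conv_lhs => rw [e3]
    rw [mul_assoc]
  rw [ENNReal.ofReal_rpow_of_nonneg (abs_nonneg _) hp.le, e1, e4]
  exact mul_le_mul' le_rfl (mul_le_mul' hup (ENNReal.ofReal_le_ofReal hdQ))

lemma besovEnergy_congr {Z : Type*} [MetricSpace Z] [MeasurableSpace Z]
    (ν : Measure Z) (θ p : ℝ) {u g : Z → ℝ} (h : u =ᵐ[ν] g) :
    besovEnergy ν θ p g = besovEnergy ν θ p u := by
  unfold besovEnergy
  apply lintegral_congr_ae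
  filter_upwards [h] with x hx
  apply lintegral_congr_ae
  filter_upwards [h] with z hz
  rw [hx, hz]

lemma besov_const_combine {CA t l a b : ℝ} (hCA : 0 < CA) (ht : 0 < t) (hl : 0 < l)
    (ha : 0 < a) (hb : 0 < b) (hba : b ≤ l * a) :
    (a/(2*CA))⁻¹ * (b/(2*CA))⁻¹ * (CA * (t*b) * (t*b)) ≤ 4*CA^3*(t*l*t) := by
  rw [inv_div, inv_div]
  rw [div_mul_div_comm, div_mul_eq_mul_div, div_le_iff₀ (by positivity)]
  nlinarith [mul_pos ha hb, mul_pos ht hb, sq_nonneg t,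
    mul_le_mul_of_nonneg_left hba (le_of_lt (by positivity : (0:ℝ) < CA^3*t^2*b))]

set_option maxHeartbeats 1600000 in
theorem besov_capacity_annulus_lower_critical
    {Z : Type*} [MetricSpace Z] [CompactSpace Z] [MeasurableSpace Z] [BorelSpace Z]
    (ν : Measure Z) (Q CA p θ : ℝ)
    (hdiam0 : 0 < Metric.diam (Set.univ : Set Z))
    (hdiam1 : Metric.diam (Set.univ : Set Z) < 1)
    (hQ : 0 < Q) (hreg : IsAhlforsRegular ν Q CA)
    (hp : 1 < p) (hθ0 : 0 < θ) (hθ1 : θ < 1) (hpθ : p * θ = Q) :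
    ∃ c > 0, ∃ C₀ > (2 : ℝ), ∀ (x₀ : Z) (r R : ℝ),
      0 < r → r ≤ R / 2 → R < Metric.diam (Set.univ : Set Z) / (4 * C₀) →
      ENNReal.ofReal (c * Real.log (R / r) ^ (1 - p)) ≤
        besovCapacity ν θ p (closedBall x₀ r) (univ \ ball x₀ R) := by
  classical
  have hCA1 : 1 ≤ CA := hreg.1
  have hCA0 : (0:ℝ) < CA := one_pos.trans_le hCA1
  set D0 := Metric.diam (Set.univ : Set Z) with hD0def
  have hθp : θ * p = Q := by rw [mul_comm]; exact hpθ
  -- the scale factor lam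
  set lam : ℝ := 2 * (2^(Q+1) * CA^2) ^ (1/Q) with hlam_def
  have hbase1 : (1:ℝ) ≤ 2^(Q+1) * CA^2 := by
    have h1 : (1:ℝ) ≤ 2^(Q+1) := Real.one_le_rpow (by norm_num) (by positivity)
    nlinarith
  have hfac1 : (1:ℝ) ≤ (2^(Q+1) * CA^2) ^ (1/Q) :=
    Real.one_le_rpow hbase1 (by positivity)
  have hlam2 : 2 ≤ lam := by rw [hlam_def]; nlinarith
  have hlam1 : (1:ℝ) < lam := by linarith
  have hlam0 : (0:ℝ) < lam := by linarith
  have hlamQ : 2^(Q+1) * CA^2 ≤ lam ^ Q := by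
    have hX0 : (0:ℝ) ≤ 2^(Q+1)*CA^2 := by positivity
    have e : lam ^ Q = 2^Q * (2^(Q+1)*CA^2) := by
      rw [hlam_def, Real.mul_rpow (by norm_num) (by positivity), ← Real.rpow_mul hX0,
        one_div, inv_mul_cancel₀ (ne_of_gt hQ), Real.rpow_one]
    have h2Q1 : (1:ℝ) ≤ 2^Q := Real.one_le_rpow (by norm_num) hQ.le
    rw [e]
    nlinarith
  -- the constants
  set K : ℝ := 4 * CA^3 * ((2:ℝ)^Q * (lam^2)^Q * (2:ℝ)^Q) with hK_def
  have h2Q0 : (0:ℝ) < (2:ℝ)^Q := Real.rpow_pos_of_pos (by norm_num) Q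
  have hlam2Q0 : (0:ℝ) < (lam^2)^Q := Real.rpow_pos_of_pos (by positivity) Q
  have hK0 : 0 < K := by rw [hK_def]; positivity
  have hloglam : 0 < Real.log lam := Real.log_pos hlam1
  have hlog2 : 0 < Real.log 2 := Real.log_pos one_lt_two
  set B : ℝ := 1 / Real.log lam + 1 / Real.log 2 with hB_def
  have hB0 : 0 < B := by rw [hB_def]; positivity
  have hBp0 : 0 < B ^ (1-p) := Real.rpow_pos_of_pos hB0 _
  refine ⟨B ^ (1-p) / K, by positivity, lam + 3, by linarith, ?_⟩
  intro x₀ r R hr hrR hR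
  haveI : IsFiniteMeasure ν := besov_finite_of_ahlfors ν Q CA hreg hdiam0
  refine le_iInf fun u => le_iInf fun hu => le_iInf fun hUex => le_iInf fun hVex => ?_
  obtain ⟨U, _, hUsub, hU1⟩ := hUex
  obtain ⟨V, _, hVsub, hV0⟩ := hVex
  have hU : ∀ x ∈ closedBall x₀ r, 1 ≤ u x := fun x hx => hU1 x (hUsub hx)
  have hV : ∀ x, x ∉ ball x₀ R → u x ≤ 0 := fun x hx => hV0 x (hVsub ⟨trivial, hx⟩)
  -- radii basics
  have hR0 : 0 < R := by linarith
  have hlamR : lam * R < D0 / 4 := by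
    have h1 : R < D0 / (4 * (lam + 3)) := hR
    have h2 : 0 < lam + 3 := by linarith
    rw [lt_div_iff₀ (by linarith)] at h1
    rw [lt_div_iff₀ (by norm_num : (0:ℝ) < 4)]
    nlinarith
  have hRr2 : (2:ℝ) ≤ R / r := (le_div_iff₀ hr).mpr (by linarith)
  -- the index M
  set M : ℕ := Nat.floor (Real.logb lam (R/r)) with hM_def
  have hRr0 : (0:ℝ) < R / r := by positivity
  have hlogb0 : 0 ≤ Real.logb lam (R/r) := Real.logb_nonneg hlam1 (by linarith)
  have hM1 : lam ^ M * r ≤ R := by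
    have h1 : (M:ℝ) ≤ Real.logb lam (R/r) := Nat.floor_le hlogb0
    have h2 : lam ^ (M:ℝ) ≤ lam ^ Real.logb lam (R/r) :=
      (Real.rpow_le_rpow_left_iff hlam1).mpr h1
    rw [Real.rpow_logb hlam0 (ne_of_gt hlam1) hRr0, Real.rpow_natCast] at h2
    calc lam ^ M * r ≤ (R/r) * r := mul_le_mul_of_nonneg_right h2 hr.le
      _ = R := div_mul_cancel₀ _ (ne_of_gt hr)
  have hM2 : R < lam ^ (M+1) * r := by
    have h1 : Real.logb lam (R/r) < (M:ℝ)+1 := Nat.lt_floor_add_one _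
    have h2 : R/r < lam ^ ((M:ℝ)+1) := by
      conv_lhs => rw [← Real.rpow_logb hlam0 (ne_of_gt hlam1) hRr0]
      exact (Real.rpow_lt_rpow_left_iff hlam1).mpr h1
    rw [show ((M:ℝ)+1) = ((M+1 : ℕ):ℝ) by push_cast; ring, Real.rpow_natCast] at h2
    calc R = (R/r) * r := (div_mul_cancel₀ _ (ne_of_gt hr)).symm
      _ < lam ^ (M+1) * r := mul_lt_mul_of_pos_right h2 hr
  -- radii and annuli
  set ρ : ℕ → ℝ := fun j => if j ≤ M then lam ^ j * r else lam * R with hρ_def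
  set σ : ℕ → ℝ := fun j => if j ≤ M then lam ^ (j-1) * r else R with hσ_def
  set S : ℕ → Set Z := fun j =>
    if j = 0 then closedBall x₀ r else ball x₀ (ρ j) \ closedBall x₀ (σ j) with hS_def
  have P1 : ∀ j, 0 < ρ j := by
    intro j
    by_cases h : j ≤ M <;> simp only [hρ_def, h, if_true, if_false] <;> positivity
  have P2 : ∀ j, 0 < σ j := by
    intro j
    by_cases h : j ≤ M <;> simp only [hσ_def, h, if_true, if_false] <;> positivity
  have Plr : ∀ j, ρ j ≤ lam * R := by
    intro j
    by_cases h : j ≤ M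
    · simp only [hρ_def, h, if_true]
      have h1 : lam ^ j ≤ lam ^ M := pow_le_pow_right₀ hlam1.le h
      have h2 : lam ^ j * r ≤ lam ^ M * r := mul_le_mul_of_nonneg_right h1 hr.le
      have h3 : R ≤ lam * R := le_mul_of_one_le_left hR0.le (by linarith)
      linarith [hM1]
    · simp only [hρ_def, h, if_false]; exact le_rfl
  have P4 : ∀ j, 2 * ρ j < 2 * D0 := by
    intro j
    have h := Plr j
    have hD00 : 0 < D0 := hdiam0
    linarith [hlamR]
  have P4' : ∀ j, ρ j < 2 * D0 := by
    intro j
    have := P4 j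
    have := P1 j
    linarith
  have P5 : ∀ k, ρ (k+1) = lam * σ (k+1) := by
    intro k
    by_cases h : k+1 ≤ M
    · simp only [hρ_def, hσ_def, h, if_true, Nat.add_sub_cancel]
      rw [pow_succ]
      ring
    · simp only [hρ_def, hσ_def, h, if_false]
  have P6 : ∀ k, k ≤ M → ρ k ≤ σ (k+1) := by
    intro k hk
    by_cases h : k+1 ≤ M
    · simp only [hρ_def, hσ_def, hk, h, if_true, Nat.add_sub_cancel]
      exact le_rfl
    · have hkM : k = M := by omega
      subst hkM
      simp only [hσ_def, hρ_def, h, if_false, le_refl, if_true]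
      exact hM1
  have P7 : ∀ k, k ≤ M → ρ (k+1) ≤ lam^2 * ρ k := by
    intro k hk
    by_cases h : k+1 ≤ M
    · simp only [hρ_def, h, if_true, hk]
      have h1 : (0:ℝ) < lam ^ k * r := by positivity
      have h2 : lam ≤ lam^2 := by nlinarith [hlam1, hlam0]
      calc lam ^ (k+1) * r = lam * (lam ^ k * r) := by rw [pow_succ]; ring
        _ ≤ lam^2 * (lam ^ k * r) := mul_le_mul_of_nonneg_right h2 h1.le
    · have hkM : k = M := by omega
      subst hkM
      simp only [hρ_def, h, if_false, le_refl, if_true]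
      have h2 : lam * R < lam * (lam ^ (M+1) * r) :=
        mul_lt_mul_of_pos_left hM2 hlam0
      calc lam * R ≤ lam * (lam ^ (M+1) * r) := h2.le
        _ = lam^2 * (lam ^ M * r) := by rw [pow_succ]; ring
  have P8 : ∀ k, k ≤ M → ρ k ≤ ρ (k+1) := by
    intro k hk
    have h1 : ρ k ≤ σ (k+1) := P6 k hk
    have h3 : 0 < σ (k+1) := P2 _
    calc ρ k ≤ σ (k+1) := h1
      _ ≤ lam * σ (k+1) := le_mul_of_one_le_left h3.le hlam1.le
      _ = ρ (k+1) := (P5 k).symm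
  have P9 : ∀ j, ∀ i, i ≤ j → j ≤ M+1 → ρ i ≤ ρ j := by
    intro j
    induction j with
    | zero => intro i hi _; interval_cases i; exact le_rfl
    | succ n ih =>
      intro i hi hn
      rcases Nat.eq_or_lt_of_le hi with h | h
      · rw [h]
      · exact le_trans (ih i (by omega) (by omega)) (P8 n (by omega))
  have P10 : ∀ j, S j ⊆ closedBall x₀ (ρ j) := by
    intro j
    by_cases h : j = 0
    · subst h
      have : ρ 0 = r := by simp [hρ_def]
      rw [this]
      simp [hS_def]
    · simp only [hS_def, h, if_false]
      exact (Set.diff_subset).trans ball_subset_closedBall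
  have P11 : ∀ k, ∀ z ∈ S (k+1), z ∉ closedBall x₀ (σ (k+1)) := by
    intro k z hz
    simp only [hS_def, Nat.succ_ne_zero, if_false] at hz
    exact hz.2
  have P15 : ∀ j, MeasurableSet (S j) := by
    intro j
    by_cases h : j = 0 <;> simp only [hS_def, h, if_true, if_false]
    · exact measurableSet_closedBall
    · exact measurableSet_ball.diff measurableSet_closedBall
  have P12 : ∀ i < M+1, ∀ j < M+1, i ≠ j → Disjoint (S i) (S j) := by
    have key : ∀ i j, i < j → j < M+1 → Disjoint (S i) (S j) := by
      intro i j hij hj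
      rw [Set.disjoint_left]
      intro z hzi hzj
      obtain ⟨k, rfl⟩ : ∃ k, j = k+1 := ⟨j-1, by omega⟩
      have h1 : z ∈ closedBall x₀ (ρ i) := P10 i hzi
      have h2 : ρ i ≤ σ (k+1) := le_trans (P9 k i (by omega) (by omega)) (P6 k (by omega))
      exact P11 k z hzj (closedBall_subset_closedBall h2 h1)
    intro i hi j hj hij
    rcases lt_or_gt_of_ne hij with h | h
    · exact key i j h hj
    · exact (key j i h hi).symm
  -- measure lower bounds
  have P13 : ∀ j, j ≤ M+1 → ENNReal.ofReal (ρ j ^ Q / (2*CA)) ≤ ν (S j) := by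
    intro j hj
    by_cases h : j = 0
    · subst h
      have hρ0 : ρ 0 = r := by simp [hρ_def]
      have hrd : r < 2 * D0 := by
        have h3 : R ≤ lam * R := le_mul_of_one_le_left hR0.le (by linarith)
        linarith [hlamR]
      have h1 := (hreg.2 x₀ r hr hrd).1
      have h2 : ν (ball x₀ r) ≤ ν (S 0) := by
        apply measure_mono
        simp only [hS_def, if_true]
        exact ball_subset_closedBall
      refine le_trans (ENNReal.ofReal_le_ofReal ?_) (le_trans h1 h2)
      rw [hρ0]
      apply div_le_div_of_nonneg_left (by positivity) hCA0
      linarith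
    · obtain ⟨k, rfl⟩ : ∃ k, j = k+1 := ⟨j-1, by omega⟩
      have h5 := P5 k
      have hann := besov_annulus_lower ν Q CA hreg hlam2 hlamQ x₀ (P2 (k+1))
        (by rw [← h5]; exact P4' (k+1))
      rw [← h5] at hann
      have : S (k+1) = ball x₀ (ρ (k+1)) \ closedBall x₀ (σ (k+1)) := by
        simp only [hS_def, Nat.succ_ne_zero, if_false]
      rw [this]
      exact hann
  have P14 : ∀ j, j ≤ M+1 → ν (S j) ≠ 0 := by
    intro j hj h0
    have := P13 j hj
    rw [h0] at this
    simp only [nonpos_iff_eq_zero, ENNReal.ofReal_eq_zero] at this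
    have h1 : 0 < ρ j ^ Q / (2*CA) := by
      have := P1 j
      positivity
    linarith
  -- measurable representative
  have hp1 : (1:ℝ≥0∞) ≤ ENNReal.ofReal p := ENNReal.one_le_ofReal.mpr hp.le
  have hu_int : Integrable u ν := hu.1.integrable hp1
  have hae := hu.1.aestronglyMeasurable
  set g : Z → ℝ := hae.mk u with hg_def
  have hgm : Measurable g := hae.measurable_mk
  have hgu : u =ᵐ[ν] g := hae.ae_eq_mk
  have hg_int : Integrable g ν := hu_int.congr hgu
  have henergy : besovEnergy ν θ p g = besovEnergy ν θ p u := besovEnergy_congr ν θ p hgu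
  -- means
  set m : ℕ → ℝ := fun j => (∫ x in S j, g x ∂ν) / (ν (S j)).toReal with hm_def
  have htR : ∀ j, j ≤ M+1 → 0 < (ν (S j)).toReal := fun j hj =>
    ENNReal.toReal_pos (P14 j hj) (measure_ne_top ν _)
  have hgu_int : ∀ j, ∫ x in S j, g x ∂ν = ∫ x in S j, u x ∂ν :=
    fun j => integral_congr_ae (ae_restrict_of_ae hgu.symm)
  have G1 : 1 ≤ m 0 := by
    have hS0 : S 0 = closedBall x₀ r := by simp [hS_def]
    have hint1 : (ν (S 0)).toReal ≤ ∫ x in S 0, u x ∂ν := by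
      calc (ν (S 0)).toReal = ∫ _x in S 0, (1:ℝ) ∂ν := by simp [setIntegral_const, Measure.real]
        _ ≤ ∫ x in S 0, u x ∂ν := by
            apply setIntegral_mono_on (integrable_const 1).integrableOn
              hu_int.integrableOn (P15 0)
            intro x hx
            exact hU x (by rwa [hS0] at hx)
    show (1:ℝ) ≤ (∫ x in S 0, g x ∂ν) / (ν (S 0)).toReal
    rw [hgu_int 0, le_div_iff₀ (htR 0 (by omega))]
    linarith
  have G2 : m (M+1) ≤ 0 := by
    have hneg : ∫ x in S (M+1), u x ∂ν ≤ 0 := by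
      apply setIntegral_nonpos (P15 (M+1))
      intro x hx
      apply hV
      intro hxball
      exact P11 M x hx (by
        have hσ : σ (M+1) = R := by simp [hσ_def]
        rw [hσ]
        exact ball_subset_closedBall hxball)
    show (∫ x in S (M+1), g x ∂ν) / (ν (S (M+1))).toReal ≤ 0
    rw [hgu_int (M+1), div_nonpos_iff]
    exact Or.inr ⟨hneg, ENNReal.toReal_nonneg⟩
  have hsum1 : 1 ≤ ∑ j ∈ Finset.range (M+1), |m j - m (j+1)| := by
    have htel : ∑ j ∈ Finset.range (M+1), (m j - m (j+1)) = m 0 - m (M+1) :=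
      Finset.sum_range_sub' m (M+1)
    calc (1:ℝ) ≤ m 0 - m (M+1) := by linarith
      _ = ∑ j ∈ Finset.range (M+1), (m j - m (j+1)) := htel.symm
      _ ≤ ∑ j ∈ Finset.range (M+1), |m j - m (j+1)| :=
          Finset.sum_le_sum fun j _ => le_abs_self _
  have hPM : ((M+1:ℕ):ℝ) ^ (1-p) ≤ ∑ j ∈ Finset.range (M+1), |m j - m (j+1)| ^ p :=
    besov_sum_rpow_lower (Nat.succ_pos M) hp.le _ (fun j => abs_nonneg _) hsum1
  -- the Besov integrand
  set W : Z → Z → ℝ≥0∞ := fun x z =>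
    ENNReal.ofReal (|g x - g z| ^ p / dist x z ^ (θ * p)) / ν (ball x (dist x z)) with hW_def
  set E : ℕ → ℝ≥0∞ := fun j => ∫⁻ x in S j, ∫⁻ z in S (j+1), W x z ∂ν ∂ν with hE_def
  -- key step estimate
  have hstep : ∀ j, j < M+1 → (ENNReal.ofReal |m j - m (j+1)|) ^ p ≤
      ENNReal.ofReal K * E j := by
    intro j hj
    have hjM : j ≤ M := by omega
    have hA0 : ν (S j) ≠ 0 := P14 j (by omega)
    have hB0 : ν (S (j+1)) ≠ 0 := P14 (j+1) (by omega)
    have hq : Real.HolderConjugate p (Real.conjExponent p) :=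
      Real.HolderConjugate.conjExponent hp
    have hcs := besov_chain_step ν g hgm hg_int (S j) (S (j+1)) hA0 hB0 hq
    set K12 : ℝ≥0∞ := ENNReal.ofReal (CA * (2*ρ (j+1)) ^ Q) *
      ENNReal.ofReal ((2*ρ (j+1)) ^ Q) with hK12_def
    have hK12T : K12 ≠ ⊤ := by
      rw [hK12_def]
      exact ENNReal.mul_ne_top ENNReal.ofReal_ne_top ENNReal.ofReal_ne_top
    have hdom : ∀ x ∈ S j, ∀ z ∈ S (j+1),
        (ENNReal.ofReal |g x - g z|) ^ p ≤ W x z * K12 := by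
      intro x hx z hz
      have hz2 : z ∉ closedBall x₀ (ρ j) :=
        fun hmem => P11 j z hz (closedBall_subset_closedBall (P6 j hjM) hmem)
      have := besov_pointwise_dom ν Q CA p θ hdiam0 hreg hQ (by linarith) hθp g x₀
        (P1 j) (P8 j hjM) rfl (P4 (j+1)) (P10 j hx) (P10 (j+1) hz) hz2
      rw [hW_def, hK12_def]
      exact this
    have hJ : (∫⁻ x in S j, ∫⁻ z in S (j+1), (ENNReal.ofReal |g x - g z|) ^ p ∂ν ∂ν) ≤
        E j * K12 := by
      calc ∫⁻ x in S j, ∫⁻ z in S (j+1), (ENNReal.ofReal |g x - g z|) ^ p ∂ν ∂ν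
          ≤ ∫⁻ x in S j, (∫⁻ z in S (j+1), W x z ∂ν) * K12 ∂ν := by
            apply setLIntegral_mono' (P15 j)
            intro x hx
            calc ∫⁻ z in S (j+1), (ENNReal.ofReal |g x - g z|) ^ p ∂ν
                ≤ ∫⁻ z in S (j+1), W x z * K12 ∂ν :=
                  setLIntegral_mono' (P15 (j+1)) (fun z hz => hdom x hx z hz)
              _ = (∫⁻ z in S (j+1), W x z ∂ν) * K12 := lintegral_mul_const' _ _ hK12T
        _ = E j * K12 := lintegral_mul_const' _ _ hK12T
    -- combine with measure lower bounds
    have hmA := P13 j (by omega)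
    have hmB := P13 (j+1) (by omega)
    have hα0 : 0 < ρ j ^ Q / (2*CA) := by
      have := P1 j; positivity
    have hβ0 : 0 < ρ (j+1) ^ Q / (2*CA) := by
      have := P1 (j+1); positivity
    have hcon : (ENNReal.ofReal (ρ j ^ Q / (2*CA)))⁻¹ *
        (ENNReal.ofReal (ρ (j+1) ^ Q / (2*CA)))⁻¹ * K12 ≤ ENNReal.ofReal K := by
      have e2 : (2*ρ (j+1))^Q = (2:ℝ)^Q * ρ (j+1)^Q :=
        Real.mul_rpow (by norm_num) (P1 _).le
      have hba : ρ (j+1)^Q ≤ (lam^2)^Q * ρ j ^ Q := by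
        calc ρ (j+1)^Q ≤ (lam^2 * ρ j)^Q :=
              Real.rpow_le_rpow (P1 _).le (P7 j hjM) hQ.le
          _ = (lam^2)^Q * ρ j ^ Q := Real.mul_rpow (by positivity) (P1 _).le
      have hreal : (ρ j ^ Q/(2*CA))⁻¹ * (ρ (j+1)^Q/(2*CA))⁻¹ *
          (CA * ((2:ℝ)^Q * ρ (j+1)^Q) * ((2:ℝ)^Q * ρ (j+1)^Q)) ≤
          4*CA^3*((2:ℝ)^Q * (lam^2)^Q * (2:ℝ)^Q) := by
        exact besov_const_combine hCA0 h2Q0 hlam2Q0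
          (Real.rpow_pos_of_pos (P1 j) Q) (Real.rpow_pos_of_pos (P1 (j+1)) Q) hba
      rw [hK12_def, e2]
      calc (ENNReal.ofReal (ρ j ^ Q / (2*CA)))⁻¹ *
            (ENNReal.ofReal (ρ (j+1) ^ Q / (2*CA)))⁻¹ *
            (ENNReal.ofReal (CA * ((2:ℝ)^Q * ρ (j+1)^Q)) *
              ENNReal.ofReal ((2:ℝ)^Q * ρ (j+1)^Q))
          = ENNReal.ofReal ((ρ j ^ Q/(2*CA))⁻¹ * (ρ (j+1)^Q/(2*CA))⁻¹ *
              (CA * ((2:ℝ)^Q * ρ (j+1)^Q) * ((2:ℝ)^Q * ρ (j+1)^Q))) := by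
            rw [← ENNReal.ofReal_inv_of_pos hα0, ← ENNReal.ofReal_inv_of_pos hβ0,
              ← ENNReal.ofReal_mul (by positivity), ← ENNReal.ofReal_mul (by positivity),
              ← ENNReal.ofReal_mul (by positivity)]
        _ ≤ ENNReal.ofReal K := by
            rw [hK_def]
            exact ENNReal.ofReal_le_ofReal hreal
    calc (ENNReal.ofReal |m j - m (j+1)|) ^ p
        ≤ (ν (S j))⁻¹ * (ν (S (j+1)))⁻¹ *
          ∫⁻ x in S j, ∫⁻ z in S (j+1), (ENNReal.ofReal |g x - g z|) ^ p ∂ν ∂ν := hcs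
      _ ≤ (ENNReal.ofReal (ρ j ^ Q / (2*CA)))⁻¹ *
          (ENNReal.ofReal (ρ (j+1) ^ Q / (2*CA)))⁻¹ * (E j * K12) :=
          mul_le_mul' (mul_le_mul' (ENNReal.inv_le_inv' hmA) (ENNReal.inv_le_inv' hmB)) hJ
      _ = ((ENNReal.ofReal (ρ j ^ Q / (2*CA)))⁻¹ *
          (ENNReal.ofReal (ρ (j+1) ^ Q / (2*CA)))⁻¹ * K12) * E j := by ring
      _ ≤ ENNReal.ofReal K * E j := mul_le_mul' hcon le_rfl
  -- sum of inner energies bounded by total energy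
  have hsumE : ∑ j ∈ Finset.range (M+1), E j ≤ besovEnergy ν θ p g := by
    have h1 : ∀ j ∈ Finset.range (M+1), E j ≤ ∫⁻ x in S j, ∫⁻ z, W x z ∂ν ∂ν := by
      intro j _
      exact lintegral_mono fun x => setLIntegral_le_lintegral _ _
    calc ∑ j ∈ Finset.range (M+1), E j
        ≤ ∑ j ∈ Finset.range (M+1), ∫⁻ x in S j, ∫⁻ z, W x z ∂ν ∂ν :=
          Finset.sum_le_sum h1
      _ = ∫⁻ x, ∫⁻ z, W x z ∂ν ∂(∑ j ∈ Finset.range (M+1), ν.restrict (S j)) :=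
          (lintegral_finset_sum_measure _ _ _).symm
      _ ≤ ∫⁻ x, ∫⁻ z, W x z ∂ν ∂ν :=
          lintegral_mono' (besov_sum_restrict_le ν S (M+1) P15 P12) le_rfl
      _ = besovEnergy ν θ p g := rfl
  -- assemble
  have hfinal : ENNReal.ofReal (((M+1:ℕ):ℝ) ^ (1-p)) ≤
      ENNReal.ofReal K * besovEnergy ν θ p u := by
    calc ENNReal.ofReal (((M+1:ℕ):ℝ) ^ (1-p))
        ≤ ENNReal.ofReal (∑ j ∈ Finset.range (M+1), |m j - m (j+1)| ^ p) :=
          ENNReal.ofReal_le_ofReal hPM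
      _ = ∑ j ∈ Finset.range (M+1), ENNReal.ofReal (|m j - m (j+1)| ^ p) :=
          ENNReal.ofReal_sum_of_nonneg (fun i _ => by positivity)
      _ = ∑ j ∈ Finset.range (M+1), (ENNReal.ofReal |m j - m (j+1)|) ^ p :=
          Finset.sum_congr rfl fun j _ =>
            (ENNReal.ofReal_rpow_of_nonneg (abs_nonneg _) (by linarith)).symm
      _ ≤ ∑ j ∈ Finset.range (M+1), ENNReal.ofReal K * E j :=
          Finset.sum_le_sum fun j hj => hstep j (Finset.mem_range.mp hj)
      _ = ENNReal.ofReal K * ∑ j ∈ Finset.range (M+1), E j := by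
          rw [Finset.mul_sum]
      _ ≤ ENNReal.ofReal K * besovEnergy ν θ p g := by gcongr
      _ = ENNReal.ofReal K * besovEnergy ν θ p u := by rw [henergy]
  have hE : ENNReal.ofReal (((M+1:ℕ):ℝ) ^ (1-p) / K) ≤ besovEnergy ν θ p u := by
    rw [ENNReal.ofReal_div_of_pos hK0]
    rw [ENNReal.div_le_iff_le_mul (Or.inl (by simp [hK0])) (Or.inl ENNReal.ofReal_ne_top)]
    rw [mul_comm]
    exact hfinal
  refine le_trans (ENNReal.ofReal_le_ofReal ?_) hE
  -- final real computation
  have hL : Real.log 2 ≤ Real.log (R/r) := Real.log_le_log (by norm_num) hRr2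
  have hL0 : 0 < Real.log (R/r) := lt_of_lt_of_le hlog2 hL
  have hNBL : ((M+1:ℕ):ℝ) ≤ B * Real.log (R/r) := by
    have h1 : (M:ℝ) ≤ Real.logb lam (R/r) := Nat.floor_le hlogb0
    have h2 : Real.logb lam (R/r) = Real.log (R/r) / Real.log lam := rfl
    have h3 : (1:ℝ) ≤ Real.log (R/r) / Real.log 2 := (one_le_div hlog2).mpr hL
    push_cast
    rw [hB_def]
    have h4 : (M:ℝ) ≤ Real.log (R/r) / Real.log lam := by rw [← h2]; exact h1
    calc (M:ℝ) + 1 ≤ Real.log (R/r) / Real.log lam + Real.log (R/r) / Real.log 2 := by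
          linarith
      _ = (1 / Real.log lam + 1 / Real.log 2) * Real.log (R/r) := by ring
  have hpow : (B * Real.log (R/r)) ^ (1-p) ≤ ((M+1:ℕ):ℝ) ^ (1-p) :=
    Real.rpow_le_rpow_of_nonpos (by positivity) hNBL (by linarith)
  calc B ^ (1-p) / K * Real.log (R/r) ^ (1-p)
      = (B * Real.log (R/r)) ^ (1-p) / K := by
        rw [Real.mul_rpow hB0.le hL0.le]; ring
    _ ≤ ((M+1:ℕ):ℝ) ^ (1-p) / K := by
        rw [div_eq_mul_inv, div_eq_mul_inv]
        exact mul_le_mul_of_nonneg_right hpow (by positivity)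
end

section
/- Let (Z,d,ν) be a compact metric measure space, 0 < diam(Z) < 1, with ν Ahlfors Q-regular for some Q > 0. Let 1 < p < ∞ and 0 < θ < 1 with pθ < Q. Then there exist constants c > 0 and C₀ > 2 (depending only on p, θ, Q and the Ahlfors regularity constant of ν) such that for every x₀ ∈ Z and all radii 0 < r < R < diam(Z)/(4C₀), the relative Besov capacity satisfies cp_{B^θ_{p,p}(Z)}(B̄(x₀,r), Z \ B(x₀,R)) ≥ c · r^{Q−θp}. -/
open MeasureTheory Metric Set
open scoped ENNReal

/-- Truncation to `[0,1]` is `1`-Lipschitz. -/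
theorem BesovAux.trunc_lip (a b : ℝ) : |max 0 (min 1 a) - max 0 (min 1 b)| ≤ |a - b| := by
  rw [max_comm 0 (min 1 a), max_comm 0 (min 1 b)]
  refine (abs_max_sub_max_le_abs _ _ _).trans ?_
  simpa using abs_min_sub_min_le_max 1 a 1 b

theorem BesovAux.geomsum_le (x : ℝ) (hx0 : 0 ≤ x) (hx1 : x < 1) (n : ℕ) :
    ∑ j ∈ Finset.range n, x ^ j ≤ (1 - x)⁻¹ := by
  calc ∑ j ∈ Finset.range n, x ^ j ≤ ∑' j : ℕ, x ^ j :=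
        Summable.sum_le_tsum _ (fun i _ => pow_nonneg hx0 i) (summable_geometric_of_lt_one hx0 hx1)
    _ = (1 - x)⁻¹ := tsum_geometric_of_lt_one hx0 hx1

/-- Hölder inequality for the double integral of `|w x - w z|`. -/
theorem BesovAux.holder_double {Z : Type*} [MeasurableSpace Z] (μ : Measure Z) [IsFiniteMeasure μ]
    {w : Z → ℝ} (hw : Measurable w) {p q : ℝ} (hpq : p.HolderConjugate q) :
    ∫⁻ x, ∫⁻ z, ENNReal.ofReal |w x - w z| ∂μ ∂μ ≤
      (∫⁻ x, ∫⁻ z, ENNReal.ofReal (|w x - w z| ^ p) ∂μ ∂μ) ^ (1/p) *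
        (μ univ * μ univ) ^ (1/q) := by
  have habs : Measurable fun y : Z × Z => |w y.1 - w y.2| :=
    ((hw.comp measurable_fst).sub (hw.comp measurable_snd)).abs
  have hF : Measurable fun y : Z × Z => ENNReal.ofReal |w y.1 - w y.2| :=
    ENNReal.measurable_ofReal.comp habs
  have hFp : Measurable fun y : Z × Z => ENNReal.ofReal (|w y.1 - w y.2| ^ p) :=
    ENNReal.measurable_ofReal.comp
      ((Real.continuous_rpow_const hpq.nonneg).measurable.comp habs)
  have e1 : ∫⁻ x, ∫⁻ z, ENNReal.ofReal |w x - w z| ∂μ ∂μ =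
      ∫⁻ y, ENNReal.ofReal |w y.1 - w y.2| ∂(μ.prod μ) :=
    (lintegral_prod _ hF.aemeasurable).symm
  have e2 : ∫⁻ y, (ENNReal.ofReal |w y.1 - w y.2|) ^ p ∂(μ.prod μ) =
      ∫⁻ x, ∫⁻ z, ENNReal.ofReal (|w x - w z| ^ p) ∂μ ∂μ := by
    rw [lintegral_congr fun y => ENNReal.ofReal_rpow_of_nonneg (abs_nonneg _) hpq.nonneg]
    exact lintegral_prod _ hFp.aemeasurable
  have H := ENNReal.lintegral_mul_le_Lp_mul_Lq (μ.prod μ) hpq hF.aemeasurable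
    (aemeasurable_const (b := (1:ℝ≥0∞)))
  simp only [Pi.mul_apply, mul_one, ENNReal.one_rpow, lintegral_one] at H
  rw [e1, ← e2]
  refine H.trans_eq ?_
  rw [← univ_prod_univ, Measure.prod_prod]

/-- One averaging step. -/
theorem BesovAux.avg_step {Z : Type*} [MeasurableSpace Z] (ν : Measure Z)
    {w : Z → ℝ} {B1 B2 : Set Z} (hsub : B1 ⊆ B2)
    (hV10 : ν B1 ≠ 0) (hV1t : ν B1 ≠ ⊤) (hV20 : ν B2 ≠ 0) (hV2t : ν B2 ≠ ⊤)
    (hw : Measurable w) :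
    (∫⁻ x in B1, ENNReal.ofReal (w x) ∂ν) / ν B1 ≤
      (∫⁻ x in B2, ENNReal.ofReal (w x) ∂ν) / ν B2 +
      (∫⁻ x in B2, ∫⁻ z in B2, ENNReal.ofReal |w x - w z| ∂ν ∂ν) / (ν B2 * ν B1) := by
  set a1 := ∫⁻ x in B1, ENNReal.ofReal (w x) ∂ν
  set a2 := ∫⁻ x in B2, ENNReal.ofReal (w x) ∂ν
  set I := ∫⁻ x in B2, ∫⁻ z in B2, ENNReal.ofReal |w x - w z| ∂ν ∂ν
  have key : ν B2 * a1 ≤ a2 * ν B1 + I := by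
    have h1 : ν B2 * a1 = ∫⁻ x in B1, ∫⁻ _ in B2, ENNReal.ofReal (w x) ∂ν ∂ν := by
      rw [show (fun x => ∫⁻ _ in B2, ENNReal.ofReal (w x) ∂ν) =
          fun x => ENNReal.ofReal (w x) * ν B2 from funext fun x => setLIntegral_const _ _]
      rw [show ∫⁻ x in B1, ENNReal.ofReal (w x) * ν B2 ∂ν
          = ∫⁻ x in B1, ν B2 * ENNReal.ofReal (w x) ∂ν from
        lintegral_congr fun x => mul_comm _ _, lintegral_const_mul' _ _ hV2t]
    have h2 : ∀ x, ∫⁻ _ in B2, ENNReal.ofReal (w x) ∂ν ≤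
        ∫⁻ z in B2, (ENNReal.ofReal (w z) + ENNReal.ofReal |w x - w z|) ∂ν := by
      intro x
      refine lintegral_mono fun z => ?_
      calc ENNReal.ofReal (w x) ≤ ENNReal.ofReal (w z + |w x - w z|) := by
            refine ENNReal.ofReal_le_ofReal ?_
            have := abs_sub_abs_le_abs_sub (w x) (w z)
            have h := le_abs_self (w x - w z)
            linarith [le_abs_self (w x - w z)]
        _ ≤ ENNReal.ofReal (w z) + ENNReal.ofReal |w x - w z| := ENNReal.ofReal_add_le
    have h3 : ∀ x, ∫⁻ z in B2, (ENNReal.ofReal (w z) + ENNReal.ofReal |w x - w z|) ∂ν =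
        a2 + ∫⁻ z in B2, ENNReal.ofReal |w x - w z| ∂ν := fun x =>
      lintegral_add_left (ENNReal.measurable_ofReal.comp hw) _
    calc ν B2 * a1 = ∫⁻ x in B1, ∫⁻ _ in B2, ENNReal.ofReal (w x) ∂ν ∂ν := h1
      _ ≤ ∫⁻ x in B1, (a2 + ∫⁻ z in B2, ENNReal.ofReal |w x - w z| ∂ν) ∂ν := by
          refine lintegral_mono fun x => ?_
          rw [← h3 x]; exact h2 x
      _ = a2 * ν B1 + ∫⁻ x in B1, ∫⁻ z in B2, ENNReal.ofReal |w x - w z| ∂ν ∂ν := by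
          rw [lintegral_add_left measurable_const, setLIntegral_const]
      _ ≤ a2 * ν B1 + I := by
          exact add_le_add_right (lintegral_mono_set hsub) _
  calc a1 / ν B1 = ν B2 * a1 / (ν B2 * ν B1) := (ENNReal.mul_div_mul_left _ _ hV20 hV2t).symm
    _ ≤ (a2 * ν B1 + I) / (ν B2 * ν B1) := ENNReal.div_le_div_right key _
    _ = a2 * ν B1 / (ν B2 * ν B1) + I / (ν B2 * ν B1) := ENNReal.add_div
    _ = a2 / ν B2 + I / (ν B2 * ν B1) := by
        congr 1
        exact ENNReal.mul_div_mul_right _ _ hV10 hV1t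

/-- The double integral of `|w x - w z|^p` over a ball is controlled by the Besov energy. -/
theorem BesovAux.energy_ball_bound {Z : Type*} [MetricSpace Z] [MeasurableSpace Z]
    [OpensMeasurableSpace Z]
    (ν : Measure Z) (θ p Q CA : ℝ) (w : Z → ℝ) (x₀ : Z) (t : ℝ)
    (hθp : 0 < θ * p) (hp0 : 0 < p) (ht : 0 < t) (hCA : 0 < CA)
    (hup : ∀ x : Z, ν (ball x (4*t)) ≤ ENNReal.ofReal (CA * (4*t) ^ Q)) :
    ∫⁻ x in ball x₀ (2*t), ∫⁻ z in ball x₀ (2*t), ENNReal.ofReal (|w x - w z| ^ p) ∂ν ∂ν ≤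
      ENNReal.ofReal (CA * (4*t) ^ (θ*p + Q)) * besovEnergy ν θ p w := by
  set s := 4*t with hs
  have hs0 : 0 < s := by positivity
  set K := ENNReal.ofReal (CA * s ^ (θ*p+Q)) with hK
  have hKt : K ≠ ⊤ := ENNReal.ofReal_ne_top
  have hpt : ∀ x ∈ ball x₀ (2*t), ∀ z ∈ ball x₀ (2*t),
      ENNReal.ofReal (|w x - w z| ^ p) ≤
        K * (ENNReal.ofReal (|w x - w z| ^ p / dist x z ^ (θ*p)) / ν (ball x (dist x z))) := by
    intro x hx z hz
    rcases eq_or_lt_of_le (dist_nonneg (x := x) (y := z)) with hd | hd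
    · have hxz : x = z := dist_eq_zero.mp hd.symm
      have h0 : |w x - w z| = 0 := by simp [hxz]
      rw [h0, Real.zero_rpow hp0.ne']
      simp
    · have hds : dist x z ≤ s := by
        have h1 : dist x x₀ < 2*t := mem_ball.mp hx
        have h2 : dist x₀ z < 2*t := by rw [dist_comm]; exact mem_ball.mp hz
        calc dist x z ≤ dist x x₀ + dist x₀ z := dist_triangle _ _ _
          _ ≤ s := by rw [hs]; linarith
      have hb1 : ν (ball x (dist x z)) ≤ ENNReal.ofReal (CA * s ^ Q) :=
        (measure_mono (ball_subset_ball hds)).trans (hup x)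
      have hb2 : |w x - w z| ^ p / s ^ (θ*p) ≤ |w x - w z| ^ p / dist x z ^ (θ*p) :=
        div_le_div_of_nonneg_left (Real.rpow_nonneg (abs_nonneg _) _)
          (Real.rpow_pos_of_pos hd _) (Real.rpow_le_rpow hd.le hds hθp.le)
      have hne0 : ENNReal.ofReal (CA * s ^ Q) ≠ 0 :=
        (ENNReal.ofReal_pos.mpr (by positivity)).ne'
      have hxv : CA * s ^ (θ*p+Q) * (|w x - w z| ^ p / s ^ (θ*p)) =
          (CA * s ^ Q) * |w x - w z| ^ p := by
        rw [Real.rpow_add hs0]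
        have hsθ : s ^ (θ*p) ≠ 0 := (Real.rpow_pos_of_pos hs0 _).ne'
        field_simp
      have e : K * (ENNReal.ofReal (|w x - w z| ^ p / s ^ (θ*p)) / ENNReal.ofReal (CA * s ^ Q))
          = ENNReal.ofReal (|w x - w z| ^ p) := by
        rw [hK, ← mul_div_assoc, ← ENNReal.ofReal_mul (by positivity), hxv,
          ENNReal.ofReal_mul (by positivity), mul_comm (ENNReal.ofReal (CA * s ^ Q)) _,
          mul_div_assoc, ENNReal.div_self hne0 ENNReal.ofReal_ne_top, mul_one]
      rw [← e]
      exact mul_le_mul_right (ENNReal.div_le_div (ENNReal.ofReal_le_ofReal hb2) hb1) _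
  calc ∫⁻ x in ball x₀ (2*t), ∫⁻ z in ball x₀ (2*t), ENNReal.ofReal (|w x - w z| ^ p) ∂ν ∂ν
      ≤ ∫⁻ x in ball x₀ (2*t), ∫⁻ z in ball x₀ (2*t),
          K * (ENNReal.ofReal (|w x - w z| ^ p / dist x z ^ (θ*p)) /
            ν (ball x (dist x z))) ∂ν ∂ν := by
        refine lintegral_mono_ae ((ae_restrict_iff' measurableSet_ball).mpr
          (ae_of_all _ fun x hx => ?_))
        refine lintegral_mono_ae ((ae_restrict_iff' measurableSet_ball).mpr
          (ae_of_all _ fun z hz => ?_))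
        exact hpt x hx z hz
    _ = K * ∫⁻ x in ball x₀ (2*t), ∫⁻ z in ball x₀ (2*t),
          ENNReal.ofReal (|w x - w z| ^ p / dist x z ^ (θ*p)) /
            ν (ball x (dist x z)) ∂ν ∂ν := by
        trans (∫⁻ x in ball x₀ (2*t), K * ∫⁻ z in ball x₀ (2*t),
          ENNReal.ofReal (|w x - w z| ^ p / dist x z ^ (θ*p)) /
            ν (ball x (dist x z)) ∂ν ∂ν)
        · exact lintegral_congr fun x => lintegral_const_mul' K _ hKt
        · exact lintegral_const_mul' K _ hKt
    _ ≤ K * besovEnergy ν θ p w := by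
        refine mul_le_mul_right ?_ _
        unfold besovEnergy
        calc ∫⁻ x in ball x₀ (2*t), ∫⁻ z in ball x₀ (2*t),
              ENNReal.ofReal (|w x - w z| ^ p / dist x z ^ (θ*p)) /
                ν (ball x (dist x z)) ∂ν ∂ν
            ≤ ∫⁻ x in ball x₀ (2*t), ∫⁻ z,
              ENNReal.ofReal (|w x - w z| ^ p / dist x z ^ (θ*p)) /
                ν (ball x (dist x z)) ∂ν ∂ν :=
              lintegral_mono fun x => setLIntegral_le_lintegral _ _
          _ ≤ ∫⁻ x, ∫⁻ z,
              ENNReal.ofReal (|w x - w z| ^ p / dist x z ^ (θ*p)) /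
                ν (ball x (dist x z)) ∂ν ∂ν := setLIntegral_le_lintegral _ _

/-- Real rpow algebra: simplification of the per-scale constant. -/
theorem BesovAux.rpow_g_eq (CA t Q p q aa θ : ℝ) (hCA : 0 < CA) (ht : 0 < t)
    (he : (θ*p+Q)*(1/p) + (Q*(1/q) + Q*(1/q)) - (Q+Q) = -aa) :
    (CA*(4*t)^(θ*p+Q))^(1/p) * ((CA*(2*t)^Q)*(CA*(2*t)^Q))^(1/q) / ((t^Q/CA)*(t^Q/CA))
      = ((CA^(1/p)*4^((θ*p+Q)*(1/p))) *
          ((CA^(1/q)*2^(Q*(1/q)))*(CA^(1/q)*2^(Q*(1/q)))) * (CA*CA)) * t^(-aa) := by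
  have e1 : (CA*(4*t)^(θ*p+Q))^(1/p) =
      CA^(1/p) * (4^((θ*p+Q)*(1/p)) * t^((θ*p+Q)*(1/p))) := by
    rw [Real.mul_rpow (by norm_num : (0:ℝ) ≤ 4) ht.le,
      Real.mul_rpow hCA.le (by positivity),
      Real.mul_rpow (by positivity) (by positivity),
      ← Real.rpow_mul (by norm_num : (0:ℝ) ≤ 4), ← Real.rpow_mul ht.le]
  have e2 : (CA*(2*t)^Q)^(1/q) = CA^(1/q) * (2^(Q*(1/q)) * t^(Q*(1/q))) := by
    rw [Real.mul_rpow (by norm_num : (0:ℝ) ≤ 2) ht.le,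
      Real.mul_rpow hCA.le (by positivity),
      Real.mul_rpow (by positivity) (by positivity),
      ← Real.rpow_mul (by norm_num : (0:ℝ) ≤ 2), ← Real.rpow_mul ht.le]
  have e3 : ((CA*(2*t)^Q)*(CA*(2*t)^Q))^(1/q) = (CA*(2*t)^Q)^(1/q) * (CA*(2*t)^Q)^(1/q) :=
    Real.mul_rpow (by positivity) (by positivity)
  have e4 : t^(-aa) = t^((θ*p+Q)*(1/p)) * (t^(Q*(1/q)) * t^(Q*(1/q))) / (t^Q * t^Q) := by
    rw [← he, Real.rpow_sub ht, Real.rpow_add ht, Real.rpow_add ht, Real.rpow_add ht]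
  rw [e1, e3, e2, e4]
  have h1 : t^Q ≠ 0 := (Real.rpow_pos_of_pos ht Q).ne'
  field_simp

theorem BesovAux.chain {m t : ℕ → ℝ≥0∞} : ∀ N : ℕ, (∀ j, j < N → m j ≤ m (j+1) + t j) →
    m 0 ≤ m N + ∑ j ∈ Finset.range N, t j := by
  intro N
  induction N with
  | zero => intro _; simp
  | succ k ih =>
    intro h
    calc m 0 ≤ m k + ∑ j ∈ Finset.range k, t j := ih fun j hj => h j (by omega)
      _ ≤ (m (k+1) + t k) + ∑ j ∈ Finset.range k, t j := add_le_add_left (h k (by omega)) _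
      _ = m (k+1) + ∑ j ∈ Finset.range (k+1), t j := by rw [Finset.sum_range_succ]; ring

set_option maxHeartbeats 2000000 in
theorem besov_capacity_annulus_lower_subcritical
    {Z : Type*} [MetricSpace Z] [CompactSpace Z] [MeasurableSpace Z] [BorelSpace Z]
    (ν : Measure Z) (Q CA p θ : ℝ)
    (hdiam0 : 0 < Metric.diam (Set.univ : Set Z))
    (hdiam1 : Metric.diam (Set.univ : Set Z) < 1)
    (hQ : 0 < Q) (hreg : IsAhlforsRegular ν Q CA)
    (hp : 1 < p) (hθ0 : 0 < θ) (hθ1 : θ < 1) (hpθ : p * θ < Q) :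
    ∃ c > 0, ∃ C₀ > (2 : ℝ), ∀ (x₀ : Z) (r R : ℝ),
      0 < r → r < R → R < Metric.diam (Set.univ : Set Z) / (4 * C₀) →
      ENNReal.ofReal (c * r ^ (Q - θ * p)) ≤
        besovCapacity ν θ p (closedBall x₀ r) (univ \ ball x₀ R) := by
  classical
  obtain ⟨hCA1, hAR⟩ := hreg
  have hCA0 : (0:ℝ) < CA := zero_lt_one.trans_le hCA1
  set D := Metric.diam (Set.univ : Set Z) with hDdef
  have hD0 : 0 < D := hdiam0
  -- Z is nonempty and ν is finite
  have hne : Nonempty Z := by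
    by_contra h
    rw [not_nonempty_iff] at h
    have : (univ : Set Z) = ∅ := eq_empty_iff_forall_notMem.mpr fun x _ => h.false x
    rw [hDdef, this, Metric.diam_empty] at hD0
    exact lt_irrefl _ hD0
  obtain ⟨x1⟩ := hne
  have hfin : IsFiniteMeasure ν := by
    constructor
    have hsub : (univ : Set Z) ⊆ ball x1 (D + D/2) := by
      intro y _
      have : dist y x1 ≤ D :=
        dist_le_diam_of_mem (isCompact_univ.isBounded) (mem_univ y) (mem_univ x1)
      exact mem_ball.mpr (by linarith)
    refine lt_of_le_of_lt (measure_mono hsub) ?_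
    exact lt_of_le_of_lt (hAR x1 (D + D/2) (by linarith) (by linarith)).2 ENNReal.ofReal_lt_top
  -- basic scalars
  have hp0 : (0:ℝ) < p := zero_lt_one.trans hp
  have hpne : p ≠ 0 := hp0.ne'
  have hQne : Q ≠ 0 := hQ.ne'
  have hθpQ : θ*p < Q := by nlinarith [mul_comm p θ]
  have hθp0 : 0 < θ*p := by positivity
  set q := p/(p-1) with hqdef
  have hpq : p.HolderConjugate q := Real.HolderConjugate.conjExponent hp
  have hq0 : 0 < q := hpq.symm.pos
  set aa := (Q - θ*p)/p with haadef
  have haa : 0 < aa := div_pos (by linarith) hp0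
  have he : (θ*p+Q)*(1/p) + (Q*(1/q) + Q*(1/q)) - (Q+Q) = -aa := by
    have h1 : p⁻¹ + q⁻¹ = 1 := hpq.inv_add_inv_eq_one
    have h2 : 1/q = 1 - 1/p := by rw [one_div, one_div]; linarith
    rw [h2, haadef]
    field_simp
    ring
  set T := (2*CA^2)^(1/Q : ℝ) with hTdef
  have h2CA : (1:ℝ) < 2*CA^2 := by nlinarith
  have hT1 : 1 < T := by
    rw [hTdef]
    exact Real.one_lt_rpow_iff_of_pos (by linarith) |>.mpr (Or.inl ⟨h2CA, by positivity⟩)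
  have hT0 : 0 < T := zero_lt_one.trans hT1
  have hTQ : T^Q = 2*CA^2 := by
    rw [hTdef, ← Real.rpow_mul (by linarith), one_div, inv_mul_cancel₀ hQne, Real.rpow_one]
  set C₀ := max 3 T with hC₀def
  have hC₀3 : (3:ℝ) ≤ C₀ := le_max_left _ _
  have hC₀T : T ≤ C₀ := le_max_right _ _
  have hC₀0 : (0:ℝ) < C₀ := by linarith
  -- the constants
  set Λ := (CA^(1/p)*4^((θ*p+Q)*(1/p))) *
      ((CA^(1/q)*2^(Q*(1/q)))*(CA^(1/q)*2^(Q*(1/q)))) * (CA*CA) with hΛdef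
  have hΛ0 : 0 < Λ := by positivity
  have hx21 : (2:ℝ)^(-aa) < 1 :=
    Real.rpow_lt_one_of_one_lt_of_neg one_lt_two (neg_lt_zero.mpr haa)
  have hx20 : (0:ℝ) ≤ 2^(-aa) := Real.rpow_nonneg (by norm_num) _
  set S := ((1:ℝ) - 2^(-aa))⁻¹ with hSdef
  have hS0 : 0 < S := inv_pos.mpr (by linarith)
  set W := Λ * S with hWdef
  have hW0 : 0 < W := mul_pos hΛ0 hS0
  set c := (2*W)^(-p : ℝ) with hcdef
  have hc0 : 0 < c := Real.rpow_pos_of_pos (by linarith) _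
  refine ⟨c, hc0, C₀, lt_of_lt_of_le (by norm_num) hC₀3, ?_⟩
  intro x₀ r R hr hrR hRd
  have hR0 : 0 < R := hr.trans hrR
  have hRD' : 4*C₀*R < D := by
    have := (lt_div_iff₀ (by positivity : (0:ℝ) < 4*C₀)).mp hRd
    linarith
  have hRltD : R < D := by nlinarith
  -- the admissible function
  refine le_iInf fun u => le_iInf fun hu => le_iInf fun hUex => le_iInf fun hVex => ?_
  obtain ⟨U, hUo, hUsub, hUge⟩ := hUex
  obtain ⟨Vs, hVo, hVsub, hVle⟩ := hVex
  -- truncation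
  set v : Z → ℝ := fun x => max 0 (min 1 (u x)) with hvdef
  have hvmeas : AEStronglyMeasurable v ν :=
    (continuous_const.max (continuous_const.min continuous_id)).comp_aestronglyMeasurable
      hu.1.aestronglyMeasurable
  have hv01 : ∀ x, 0 ≤ v x ∧ v x ≤ 1 := fun x =>
    ⟨le_max_left _ _, max_le (by norm_num) (min_le_left _ _)⟩
  set w : Z → ℝ := fun x => max 0 (min 1 (hvmeas.mk v x)) with hwdef
  have hwmeas : Measurable w :=
    measurable_const.max (measurable_const.min hvmeas.stronglyMeasurable_mk.measurable)
  have hwv : w =ᵐ[ν] v := by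
    filter_upwards [hvmeas.ae_eq_mk] with x hx
    rw [hwdef]
    simp only
    rw [← hx, min_eq_right (hv01 x).2, max_eq_right (hv01 x).1]
  have hw01 : ∀ x, 0 ≤ w x ∧ w x ≤ 1 := fun x =>
    ⟨le_max_left _ _, max_le (by norm_num) (min_le_left _ _)⟩
  have hv1 : ∀ x ∈ closedBall x₀ r, v x = 1 := by
    intro x hx
    have h1 : 1 ≤ u x := hUge x (hUsub hx)
    rw [hvdef]
    simp only
    rw [min_eq_left h1, max_eq_right zero_le_one]
  have hv0 : ∀ x, x ∉ ball x₀ R → v x = 0 := by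
    intro x hx
    have h1 : u x ≤ 0 := hVle x (hVsub ⟨mem_univ x, hx⟩)
    rw [hvdef]
    simp only
    rw [max_eq_left ((min_le_right _ _).trans h1)]
  -- energy comparison
  set E := besovEnergy ν θ p w with hEdef
  have hEu : E ≤ besovEnergy ν θ p u := by
    rw [hEdef]
    unfold besovEnergy
    refine lintegral_mono_ae ?_
    filter_upwards [hwv] with x hx
    refine lintegral_mono_ae ?_
    filter_upwards [hwv] with z hz
    refine ENNReal.div_le_div_right (ENNReal.ofReal_le_ofReal ?_) _
    have habs : |w x - w z| ≤ |u x - u z| := by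
      rw [hx, hz, hvdef]
      exact BesovAux.trunc_lip _ _
    have hnum : |w x - w z|^p ≤ |u x - u z|^p :=
      Real.rpow_le_rpow (abs_nonneg _) habs hp0.le
    rcases (Real.rpow_nonneg (dist_nonneg (x := x) (y := z)) (θ*p)).eq_or_lt with h|h
    · rw [← h, div_zero, div_zero]
    · exact div_le_div_of_nonneg_right hnum h.le
  refine le_trans ?_ hEu
  -- scales
  have hex : ∃ n : ℕ, T*R ≤ 2^n*r := by
    obtain ⟨n, hn⟩ := pow_unbounded_of_one_lt (T*R/r) one_lt_two
    exact ⟨n, (div_le_iff₀ hr).mp hn.le⟩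
  set ρ : ℕ → ℝ := fun j => 2^j*r with hρdef
  have hρpos : ∀ j, 0 < ρ j := fun j => by simp only [hρdef]; positivity
  have hρmono : ∀ i j, i ≤ j → ρ i ≤ ρ j := fun i j h => by
    simp only [hρdef]
    exact mul_le_mul_of_nonneg_right (pow_le_pow_right₀ one_le_two h) hr.le
  have hρsucc : ∀ j, ρ (j+1) = 2*ρ j := fun j => by simp only [hρdef]; rw [pow_succ]; ring
  set N := Nat.find hex with hNdef
  have hNspec : T*R ≤ ρ N := by simp only [hρdef]; exact Nat.find_spec hex
  have hN0 : 0 < N := by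
    rcases Nat.eq_zero_or_pos N with h|h
    · exfalso
      have h1 : T*R ≤ ρ 0 := by rw [← h]; exact hNspec
      simp only [hρdef, pow_zero, one_mul] at h1
      nlinarith
    · exact h
  have hNmin : (2:ℝ)^(N-1)*r < T*R := by
    have h1 : ¬ (T*R ≤ 2^(N-1)*r) := by
      rw [hNdef] at hN0 ⊢
      exact Nat.find_min hex (by omega)
    linarith [lt_of_not_ge h1]
  have hρN : ρ N < D/2 := by
    have h1 : ρ N = 2*(2^(N-1)*r) := by
      simp only [hρdef]
      conv_lhs => rw [show N = N-1+1 by omega]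
      rw [pow_succ]; ring
    nlinarith [mul_nonneg (sub_nonneg.mpr hC₀T) hR0.le]
  -- measure bounds at each scale
  have hVlow : ∀ j, j ≤ N → ENNReal.ofReal ((ρ j)^Q/CA) ≤ ν (ball x₀ (ρ j)) := by
    intro j hj
    refine (hAR x₀ (ρ j) (hρpos j) ?_).1
    have := (hρmono j N hj).trans_lt hρN
    nlinarith
  have hballup : ∀ (x : Z) (s : ℝ), 0 < s → s ≤ 2*ρ N →
      ν (ball x s) ≤ ENNReal.ofReal (CA*s^Q) := by
    intro x s hs hsN
    exact (hAR x s hs (by nlinarith)).2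
  have hV0 : ∀ j, j ≤ N → ν (ball x₀ (ρ j)) ≠ 0 := fun j hj =>
    (lt_of_lt_of_le (ENNReal.ofReal_pos.mpr
      (div_pos (Real.rpow_pos_of_pos (hρpos j) _) hCA0)) (hVlow j hj)).ne'
  have hVt : ∀ j, j ≤ N → ν (ball x₀ (ρ j)) ≠ ⊤ := fun j hj =>
    ne_top_of_le_ne_top ENNReal.ofReal_ne_top
      (hballup x₀ (ρ j) (hρpos j) (by linarith [hρmono j N hj, hρpos N]))
  -- one-step estimate
  have hstep : ∀ j, j < N →
      (∫⁻ x in ball x₀ (ρ j), ENNReal.ofReal (w x) ∂ν) / ν (ball x₀ (ρ j)) ≤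
        (∫⁻ x in ball x₀ (ρ (j+1)), ENNReal.ofReal (w x) ∂ν) / ν (ball x₀ (ρ (j+1))) +
        (∫⁻ x in ball x₀ (ρ (j+1)), ∫⁻ z in ball x₀ (ρ (j+1)),
            ENNReal.ofReal |w x - w z| ∂ν ∂ν)
          / (ν (ball x₀ (ρ (j+1))) * ν (ball x₀ (ρ j))) := by
    intro j hj
    exact BesovAux.avg_step ν (ball_subset_ball (hρmono j (j+1) (by omega)))
      (hV0 j (by omega)) (hVt j (by omega)) (hV0 (j+1) hj) (hVt (j+1) hj) hwmeas
  -- bound for each chain term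
  have hterm : ∀ j, j < N →
      (∫⁻ x in ball x₀ (ρ (j+1)), ∫⁻ z in ball x₀ (ρ (j+1)),
          ENNReal.ofReal |w x - w z| ∂ν ∂ν)
        / (ν (ball x₀ (ρ (j+1))) * ν (ball x₀ (ρ j))) ≤
      ENNReal.ofReal (Λ * ((2^(-aa))^j * r^(-aa))) * E^(1/p) := by
    intro j hj
    have hj1 : j+1 ≤ N := hj
    have hsucc : ρ (j+1) = 2*ρ j := hρsucc j
    have htpos : 0 < ρ j := hρpos j
    have hρ4 : 4*ρ j ≤ 2*ρ N := by
      have h41 : 4*ρ j = 2*ρ (j+1) := by rw [hsucc]; ring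
      rw [h41]
      have := hρmono (j+1) N hj1
      linarith
    have hA : ∫⁻ x in ball x₀ (2*ρ j), ∫⁻ z in ball x₀ (2*ρ j),
        ENNReal.ofReal (|w x - w z| ^ p) ∂ν ∂ν ≤
        ENNReal.ofReal (CA * (4*ρ j) ^ (θ*p + Q)) * E := by
      rw [hEdef]
      refine BesovAux.energy_ball_bound ν θ p Q CA w x₀ (ρ j) hθp0 hp0 htpos hCA0 ?_
      intro x
      exact hballup x (4*ρ j) (by linarith) hρ4
    have hH : (∫⁻ x in ball x₀ (ρ (j+1)), ∫⁻ z in ball x₀ (ρ (j+1)),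
          ENNReal.ofReal |w x - w z| ∂ν ∂ν) ≤
        (∫⁻ x in ball x₀ (ρ (j+1)), ∫⁻ z in ball x₀ (ρ (j+1)),
            ENNReal.ofReal (|w x - w z|^p) ∂ν ∂ν)^(1/p) *
          (ν (ball x₀ (ρ (j+1))) * ν (ball x₀ (ρ (j+1))))^(1/q) := by
      have h0 := BesovAux.holder_double (ν.restrict (ball x₀ (ρ (j+1)))) hwmeas hpq
      simpa [Measure.restrict_apply_univ] using h0
    set β := ENNReal.ofReal ((ρ j)^Q/CA) with hβdef
    have hβ0 : β ≤ ν (ball x₀ (ρ j)) := hVlow j (by omega)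
    have hβ1 : β ≤ ν (ball x₀ (ρ (j+1))) :=
      hβ0.trans (measure_mono (ball_subset_ball (hρmono j (j+1) (by omega))))
    set γ := ENNReal.ofReal (CA*(2*ρ j)^Q) with hγdef
    have hγ1 : ν (ball x₀ (ρ (j+1))) ≤ γ := by
      have h2 := hballup x₀ (2*ρ j) (by linarith) (by linarith)
      rw [hsucc]
      exact h2
    have hKnn : (0:ℝ) ≤ CA * (4*ρ j) ^ (θ*p + Q) :=
      mul_nonneg hCA0.le (Real.rpow_nonneg (by linarith) _)
    have hγnn : (0:ℝ) ≤ CA*(2*ρ j)^Q := mul_nonneg hCA0.le (Real.rpow_nonneg (by linarith) _)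
    have hβnn : (0:ℝ) ≤ (ρ j)^Q/CA := div_nonneg (Real.rpow_nonneg htpos.le _) hCA0.le
    have hβpos : (0:ℝ) < ((ρ j)^Q/CA)*((ρ j)^Q/CA) :=
      mul_pos (div_pos (Real.rpow_pos_of_pos htpos _) hCA0)
        (div_pos (Real.rpow_pos_of_pos htpos _) hCA0)
    calc (∫⁻ x in ball x₀ (ρ (j+1)), ∫⁻ z in ball x₀ (ρ (j+1)),
            ENNReal.ofReal |w x - w z| ∂ν ∂ν)
          / (ν (ball x₀ (ρ (j+1))) * ν (ball x₀ (ρ j)))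
        ≤ ((ENNReal.ofReal (CA * (4*ρ j) ^ (θ*p + Q)) * E)^(1/p) * (γ*γ)^(1/q)) / (β*β) := by
          refine ENNReal.div_le_div ?_ (mul_le_mul' hβ1 hβ0)
          refine hH.trans (mul_le_mul'
            (ENNReal.rpow_le_rpow ?_ (one_div_nonneg.mpr hp0.le))
            (ENNReal.rpow_le_rpow (mul_le_mul' hγ1 hγ1) (one_div_nonneg.mpr hq0.le)))
          rw [hsucc]
          exact hA
      _ = ((ENNReal.ofReal (CA * (4*ρ j) ^ (θ*p + Q)))^(1/p) * (γ*γ)^(1/q) / (β*β)) * E^(1/p) := by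
          rw [ENNReal.mul_rpow_of_nonneg _ _ (one_div_nonneg.mpr hp0.le)]
          rw [show (ENNReal.ofReal (CA * (4*ρ j) ^ (θ*p + Q)))^(1/p) * E^(1/p) * ((γ*γ)^(1/q))
              = E^(1/p) * ((ENNReal.ofReal (CA * (4*ρ j) ^ (θ*p + Q)))^(1/p) * (γ*γ)^(1/q))
            by ring]
          rw [mul_div_assoc, mul_comm]
      _ ≤ ENNReal.ofReal (Λ * ((2^(-aa))^j * r^(-aa))) * E^(1/p) := by
          refine mul_le_mul_left (le_of_eq ?_) _
          rw [hγdef, hβdef]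
          rw [ENNReal.ofReal_rpow_of_nonneg hKnn (one_div_nonneg.mpr hp0.le)]
          rw [← ENNReal.ofReal_mul hγnn]
          rw [ENNReal.ofReal_rpow_of_nonneg (mul_nonneg hγnn hγnn) (one_div_nonneg.mpr hq0.le)]
          rw [← ENNReal.ofReal_mul (Real.rpow_nonneg hKnn _)]
          rw [← ENNReal.ofReal_mul hβnn]
          rw [← ENNReal.ofReal_div_of_pos hβpos]
          rw [BesovAux.rpow_g_eq CA (ρ j) Q p q aa θ hCA0 htpos he]
          rw [← hΛdef]
          congr 1
          simp only [hρdef]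
          rw [Real.mul_rpow (by positivity) hr.le, ← Real.rpow_natCast (2:ℝ) j,
            ← Real.rpow_mul (by norm_num : (0:ℝ) ≤ 2), mul_comm (j:ℝ) (-aa),
            Real.rpow_mul (by norm_num : (0:ℝ) ≤ 2), Real.rpow_natCast]
  -- the telescoping chain
  have hchain : (∫⁻ x in ball x₀ (ρ 0), ENNReal.ofReal (w x) ∂ν) / ν (ball x₀ (ρ 0)) ≤
      (∫⁻ x in ball x₀ (ρ N), ENNReal.ofReal (w x) ∂ν) / ν (ball x₀ (ρ N)) +
      ∑ j ∈ Finset.range N,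
        (∫⁻ x in ball x₀ (ρ (j+1)), ∫⁻ z in ball x₀ (ρ (j+1)),
            ENNReal.ofReal |w x - w z| ∂ν ∂ν)
          / (ν (ball x₀ (ρ (j+1))) * ν (ball x₀ (ρ j))) :=
    BesovAux.chain N hstep
  -- the two ends of the chain
  have hm0 : (∫⁻ x in ball x₀ (ρ 0), ENNReal.ofReal (w x) ∂ν) / ν (ball x₀ (ρ 0)) = 1 := by
    have hρ0 : ρ 0 = r := by simp [hρdef]
    have h2 : ∀ᵐ x ∂ν.restrict (ball x₀ (ρ 0)), w x = v x := ae_restrict_of_ae hwv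
    have h3 : ∀ᵐ x ∂ν.restrict (ball x₀ (ρ 0)), v x = 1 :=
      (ae_restrict_iff' measurableSet_ball).mpr (ae_of_all _ fun x hx =>
        hv1 x (ball_subset_closedBall (by rwa [hρ0] at hx)))
    have h4 : (∫⁻ x in ball x₀ (ρ 0), ENNReal.ofReal (w x) ∂ν) = ν (ball x₀ (ρ 0)) := by
      calc ∫⁻ x in ball x₀ (ρ 0), ENNReal.ofReal (w x) ∂ν
          = ∫⁻ _ in ball x₀ (ρ 0), 1 ∂ν := by
            refine lintegral_congr_ae ?_
            filter_upwards [h2, h3] with x hx2 hx3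
            rw [hx2, hx3]
            simp
        _ = ν (ball x₀ (ρ 0)) := setLIntegral_one _
    rw [h4]
    exact ENNReal.div_self (hV0 0 (by omega)) (hVt 0 (by omega))
  have hmN : (∫⁻ x in ball x₀ (ρ N), ENNReal.ofReal (w x) ∂ν) / ν (ball x₀ (ρ N)) ≤
      ENNReal.ofReal (1/2) := by
    have h5 : (∫⁻ x in ball x₀ (ρ N), ENNReal.ofReal (w x) ∂ν) ≤
        ENNReal.ofReal (CA*R^Q) := by
      have hae : ∀ᵐ x ∂ν.restrict (ball x₀ (ρ N)),
          ENNReal.ofReal (w x) ≤ (ball x₀ R).indicator (fun _ => (1:ℝ≥0∞)) x := by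
        filter_upwards [ae_restrict_of_ae hwv] with x hx
        by_cases hxR : x ∈ ball x₀ R
        · rw [indicator_of_mem hxR]
          exact ENNReal.ofReal_le_one.mpr (by rw [hx]; exact (hv01 x).2)
        · rw [indicator_of_notMem hxR, hx, hv0 x hxR]
          simp
      calc (∫⁻ x in ball x₀ (ρ N), ENNReal.ofReal (w x) ∂ν)
          ≤ ∫⁻ x in ball x₀ (ρ N), (ball x₀ R).indicator (fun _ => 1) x ∂ν :=
            lintegral_mono_ae hae
        _ = ν (ball x₀ R ∩ ball x₀ (ρ N)) := by
            rw [lintegral_indicator measurableSet_ball, setLIntegral_one,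
              Measure.restrict_apply measurableSet_ball]
        _ ≤ ν (ball x₀ R) := measure_mono inter_subset_left
        _ ≤ ENNReal.ofReal (CA*R^Q) := (hAR x₀ R hR0 (by nlinarith)).2
    have h6 := hVlow N le_rfl
    calc (∫⁻ x in ball x₀ (ρ N), ENNReal.ofReal (w x) ∂ν) / ν (ball x₀ (ρ N))
        ≤ ENNReal.ofReal (CA*R^Q) / ENNReal.ofReal ((ρ N)^Q/CA) := ENNReal.div_le_div h5 h6
      _ = ENNReal.ofReal ((CA*R^Q) / ((ρ N)^Q/CA)) :=
          (ENNReal.ofReal_div_of_pos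
            (div_pos (Real.rpow_pos_of_pos (hρpos N) _) hCA0)).symm
      _ ≤ ENNReal.ofReal (1/2) := by
          refine ENNReal.ofReal_le_ofReal ?_
          have hρNQ : 2*CA^2*R^Q ≤ (ρ N)^Q := by
            have h7 : (T*R)^Q ≤ (ρ N)^Q :=
              Real.rpow_le_rpow (by positivity) hNspec hQ.le
            rwa [Real.mul_rpow hT0.le hR0.le, hTQ] at h7
          rw [div_div_eq_mul_div, div_le_iff₀ (Real.rpow_pos_of_pos (hρpos N) _)]
          nlinarith [Real.rpow_pos_of_pos hR0 Q]
  -- put everything together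
  have hone : (1:ℝ≥0∞) ≤ ENNReal.ofReal (1/2) + ENNReal.ofReal (W*r^(-aa)) * E^(1/p) := by
    rw [hm0] at hchain
    refine hchain.trans (add_le_add hmN ?_)
    calc ∑ j ∈ Finset.range N,
          (∫⁻ x in ball x₀ (ρ (j+1)), ∫⁻ z in ball x₀ (ρ (j+1)),
              ENNReal.ofReal |w x - w z| ∂ν ∂ν)
            / (ν (ball x₀ (ρ (j+1))) * ν (ball x₀ (ρ j)))
        ≤ ∑ j ∈ Finset.range N, ENNReal.ofReal (Λ*((2^(-aa))^j * r^(-aa))) * E^(1/p) :=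
          Finset.sum_le_sum fun j hj => hterm j (Finset.mem_range.mp hj)
      _ = (∑ j ∈ Finset.range N, ENNReal.ofReal (Λ*((2^(-aa))^j * r^(-aa)))) * E^(1/p) := by
          rw [Finset.sum_mul]
      _ ≤ ENNReal.ofReal (W*r^(-aa)) * E^(1/p) := by
          refine mul_le_mul_left ?_ _
          rw [← ENNReal.ofReal_sum_of_nonneg (fun i _ =>
            mul_nonneg hΛ0.le (mul_nonneg (pow_nonneg hx20 _) (Real.rpow_nonneg hr.le _)))]
          refine ENNReal.ofReal_le_ofReal ?_
          have hsum : ∑ j ∈ Finset.range N, Λ*((2^(-aa))^j * r^(-aa)) =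
              (Λ*r^(-aa)) * ∑ j ∈ Finset.range N, (2^(-aa))^j := by
            rw [Finset.mul_sum]
            exact Finset.sum_congr rfl fun j _ => by ring
          rw [hsum]
          have hgs := BesovAux.geomsum_le (2^(-aa)) hx20 hx21 N
          calc (Λ*r^(-aa)) * ∑ j ∈ Finset.range N, (2^(-aa))^j ≤ (Λ*r^(-aa)) * S := by
                refine mul_le_mul_of_nonneg_left ?_
                  (mul_nonneg hΛ0.le (Real.rpow_nonneg hr.le _))
                rw [hSdef]
                exact hgs
            _ = W*r^(-aa) := by rw [hWdef]; ring
  have hhalfsum : ENNReal.ofReal (1/2) + ENNReal.ofReal (1/2) = 1 := by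
    rw [← ENNReal.ofReal_add (by norm_num) (by norm_num)]
    norm_num
  have hhalf : ENNReal.ofReal (1/2) ≤ ENNReal.ofReal (W*r^(-aa)) * E^(1/p) := by
    rw [← hhalfsum] at hone
    exact (ENNReal.add_le_add_iff_left ENNReal.ofReal_ne_top).mp hone
  have hpos2 : (0:ℝ) < W*r^(-aa) := mul_pos hW0 (Real.rpow_pos_of_pos hr _)
  have hEb : ENNReal.ofReal ((1/2) / (W*r^(-aa))) ≤ E^(1/p) := by
    rw [ENNReal.ofReal_div_of_pos hpos2]
    calc ENNReal.ofReal (1/2) / ENNReal.ofReal (W*r^(-aa))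
        ≤ (ENNReal.ofReal (W*r^(-aa)) * E^(1/p)) / ENNReal.ofReal (W*r^(-aa)) :=
          ENNReal.div_le_div_right hhalf _
      _ = E^(1/p) := by
          rw [mul_comm, mul_div_assoc,
            ENNReal.div_self (ENNReal.ofReal_pos.mpr hpos2).ne' ENNReal.ofReal_ne_top, mul_one]
  have h8 : (ENNReal.ofReal ((1/2)/(W*r^(-aa))))^(p:ℝ) ≤ (E^(1/p))^(p:ℝ) :=
    ENNReal.rpow_le_rpow hEb hp0.le
  rw [← ENNReal.rpow_mul, one_div_mul_cancel hpne, ENNReal.rpow_one] at h8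
  refine le_trans (le_of_eq ?_) h8
  rw [ENNReal.ofReal_rpow_of_nonneg (le_of_lt (div_pos one_half_pos hpos2)) hp0.le]
  congr 1
  have hbase : (1/2) / (W*r^(-aa)) = (2*W)⁻¹ * r^aa := by
    rw [Real.rpow_neg hr.le]
    have hra : r^aa ≠ 0 := (Real.rpow_pos_of_pos hr _).ne'
    field_simp
  rw [hbase, Real.mul_rpow (inv_nonneg.mpr (by linarith)) (Real.rpow_nonneg hr.le _),
    Real.inv_rpow (by linarith), ← Real.rpow_neg (by linarith), ← Real.rpow_mul hr.le]
  rw [show aa * p = Q - θ*p by rw [haadef]; exact div_mul_cancel₀ _ hpne]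
end

section
/- Let (Z,d,ν) be a compact metric measure space, 0 < diam(Z) < 1, with ν Ahlfors Q-regular for some Q > 0. Let x₀ ∈ Z, R > 0, 0 < s < Q, and let E, F ⊂ B(x₀,R) be two disjoint compact sets. Then for each p > max{1, Q−s} and each θ with (Q−s)/p < θ < 1, there is a constant c > 0 (depending only on p, θ, s, Q and the Ahlfors regularity constant of ν, but not on x₀, R, E, F) such that the relative Besov capacity satisfies cp_{B^θ_{p,p}(Z)}(E,F) ≥ c · min{H^s_∞(E), H^s_∞(F)} / R^{s−Q+θp}. -/
open MeasureTheory Metric Set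
open scoped ENNReal

/-- The `s`-dimensional Hausdorff content of a set: the infimum of `∑ diam(Bᵢ)^s` over
countable covers of the set by balls `Bᵢ`. -/
noncomputable def hausdorffContent {Z : Type*} [MetricSpace Z] (s : ℝ) (E : Set Z) : ℝ≥0∞ :=
  ⨅ (c : ℕ → Z) (ρ : ℕ → ℝ) (_ : E ⊆ ⋃ i, ball (c i) (ρ i)),
    ∑' i, ENNReal.ofReal (Metric.diam (ball (c i) (ρ i)) ^ s)


namespace BCap

open MeasureTheory Metric Set
open scoped ENNReal

variable {Z : Type*} [MetricSpace Z] [MeasurableSpace Z] [BorelSpace Z]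

set_option linter.unusedSectionVars false

/-- local double energy on a set -/
noncomputable def EN (ν : Measure Z) (θ p : ℝ) (u : Z → ℝ) (B : Set Z) : ℝ≥0∞ :=
  ∫⁻ y in B, ∫⁻ z in B,
    ENNReal.ofReal (|u y - u z| ^ p / dist y z ^ (θ * p)) / ν (ball y (dist y z)) ∂ν ∂ν

lemma EN_one_sub (ν : Measure Z) (θ p : ℝ) (u : Z → ℝ) (B : Set Z) :
    EN ν θ p (fun z => 1 - u z) B = EN ν θ p u B := by
  unfold EN
  refine lintegral_congr fun y => lintegral_congr fun z => ?_
  have : |1 - u y - (1 - u z)| = |u y - u z| := by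
    rw [abs_sub_comm]; ring_nf
  rw [this]

lemma besovEnergy_one_sub (ν : Measure Z) (θ p : ℝ) (u : Z → ℝ) :
    besovEnergy ν θ p (fun z => 1 - u z) = besovEnergy ν θ p u := by
  unfold besovEnergy
  refine lintegral_congr fun y => lintegral_congr fun z => ?_
  have : |1 - u y - (1 - u z)| = |u y - u z| := by
    rw [abs_sub_comm]; ring_nf
  rw [this]

lemma besovEnergy_eq_EN_univ (ν : Measure Z) (θ p : ℝ) (u : Z → ℝ) :
    besovEnergy ν θ p u = EN ν θ p u univ := by
  unfold besovEnergy EN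
  simp [Measure.restrict_univ]

lemma tsum_EN_le {ι : Type*} [Countable ι] (ν : Measure Z) (θ p : ℝ) (u : Z → ℝ)
    (Bs : ι → Set Z) (hm : ∀ i, MeasurableSet (Bs i)) (hd : Pairwise (Function.onFun Disjoint Bs)) :
    ∑' i, EN ν θ p u (Bs i) ≤ besovEnergy ν θ p u := by
  set K : Z → Z → ℝ≥0∞ := fun y z =>
    ENNReal.ofReal (|u y - u z| ^ p / dist y z ^ (θ * p)) / ν (ball y (dist y z)) with hK
  have step1 : ∀ i, EN ν θ p u (Bs i) ≤ ∫⁻ y in Bs i, ∫⁻ z, K y z ∂ν ∂ν := by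
    intro i
    exact lintegral_mono fun y => setLIntegral_le_lintegral _ _
  calc ∑' i, EN ν θ p u (Bs i) ≤ ∑' i, ∫⁻ y in Bs i, ∫⁻ z, K y z ∂ν ∂ν :=
        ENNReal.tsum_le_tsum step1
    _ = ∫⁻ y in ⋃ i, Bs i, ∫⁻ z, K y z ∂ν ∂ν := by
        rw [Measure.restrict_iUnion hd hm, lintegral_sum_measure]
    _ ≤ ∫⁻ y, ∫⁻ z, K y z ∂ν ∂ν := setLIntegral_le_lintegral _ _
    _ = besovEnergy ν θ p u := rfl

end BCap
namespace BCap

open MeasureTheory Metric Set Function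
open scoped ENNReal

variable {Z : Type*} [MetricSpace Z] [MeasurableSpace Z] [BorelSpace Z]

set_option linter.unusedSectionVars false

lemma rpow_combine {X I : ℝ≥0∞} {p q : ℝ} (hpq : p.HolderConjugate q)
    (hx0 : X ≠ 0) (hxt : X ≠ ⊤) :
    (X⁻¹ * (I ^ (1/p) * X ^ (1/q))) ^ p = X⁻¹ * I := by
  have hp0 : (0:ℝ) ≤ p := hpq.pos.le
  have h1 : (X⁻¹ * (I ^ (1/p) * X ^ (1/q))) ^ p
      = (X⁻¹) ^ p * ((I ^ (1/p)) ^ p * (X ^ (1/q)) ^ p) := by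
    rw [ENNReal.mul_rpow_of_nonneg _ _ hp0, ENNReal.mul_rpow_of_nonneg _ _ hp0]
  rw [h1]
  have h2 : (I ^ (1/p)) ^ p = I := by
    rw [← ENNReal.rpow_mul, one_div, inv_mul_cancel₀ hpq.ne_zero, ENNReal.rpow_one]
  have h3 : (X⁻¹) ^ p * (X ^ (1/q)) ^ p = X⁻¹ := by
    rw [← ENNReal.rpow_neg_one X, ← ENNReal.rpow_mul, ← ENNReal.rpow_mul,
      ← ENNReal.rpow_add _ _ hx0 hxt]
    congr 1
    have h := hpq.inv_add_inv_eq_one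
    have hq : q⁻¹ = 1 - p⁻¹ := by linarith
    have hne : p ≠ 0 := ne_of_gt hpq.pos
    simp only [one_div]
    rw [hq]
    field_simp
    ring
  calc (X⁻¹) ^ p * ((I ^ (1/p)) ^ p * (X ^ (1/q)) ^ p)
      = (X⁻¹) ^ p * (X ^ (1/q)) ^ p * I := by rw [h2]; ring
    _ = X⁻¹ * I := by rw [h3]

lemma avg_diff_bound (ν : Measure Z) [IsFiniteMeasure ν] {u : Z → ℝ} {p : ℝ}
    (hp1 : 1 < p) (hu_int : Integrable u ν) (hu_aem : AEMeasurable u ν)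
    {A B : Set Z} (hA : MeasurableSet A) (hB : MeasurableSet B)
    (hA0 : ν A ≠ 0) (hB0 : ν B ≠ 0) :
    ENNReal.ofReal |(⨍ y in A, u y ∂ν) - ⨍ z in B, u z ∂ν| ^ p
      ≤ (ν A * ν B)⁻¹ * ∫⁻ y in A, ∫⁻ z in B, ENNReal.ofReal (|u y - u z| ^ p) ∂ν ∂ν := by
  have hp0 : (0:ℝ) < p := lt_trans zero_lt_one hp1
  have hAt : ν A ≠ ⊤ := measure_ne_top ν A
  have hBt : ν B ≠ ⊤ := measure_ne_top ν B
  have ha : (0:ℝ) < (ν A).toReal := ENNReal.toReal_pos hA0 hAt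
  have hb : (0:ℝ) < (ν B).toReal := ENNReal.toReal_pos hB0 hBt
  set q := Real.conjExponent p with hqdef
  have hpq : p.HolderConjugate q := Real.HolderConjugate.conjExponent hp1
  -- step 1: identity
  have inner_eq : ∀ y : Z, ∫ z in B, (u y - u z) ∂ν = (ν B).toReal * u y - ∫ z in B, u z ∂ν := by
    intro y
    rw [integral_sub (integrable_const _) hu_int.integrableOn, setIntegral_const]
    simp [smul_eq_mul, measureReal_def]
  have double_eq : ∫ y in A, (∫ z in B, (u y - u z) ∂ν) ∂ν
      = (ν B).toReal * ∫ y in A, u y ∂ν - (ν A).toReal * ∫ z in B, u z ∂ν := by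
    calc ∫ y in A, (∫ z in B, (u y - u z) ∂ν) ∂ν
        = ∫ y in A, ((ν B).toReal * u y - ∫ z in B, u z ∂ν) ∂ν :=
          integral_congr_ae (Filter.Eventually.of_forall fun y => inner_eq y)
      _ = (ν B).toReal * ∫ y in A, u y ∂ν - (ν A).toReal * ∫ z in B, u z ∂ν := by
          rw [integral_sub ((hu_int.integrableOn).const_mul _) (integrable_const _),
            integral_const_mul, setIntegral_const]
          simp [smul_eq_mul, measureReal_def]
  have key : (⨍ y in A, u y ∂ν) - ⨍ z in B, u z ∂ν
      = ((ν A).toReal * (ν B).toReal)⁻¹ * ∫ y in A, (∫ z in B, (u y - u z) ∂ν) ∂ν := by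
    rw [double_eq, setAverage_eq, setAverage_eq]
    simp only [smul_eq_mul, measureReal_def]
    field_simp
  -- step 2
  have habs : ENNReal.ofReal |(⨍ y in A, u y ∂ν) - ⨍ z in B, u z ∂ν|
      ≤ (ν A * ν B)⁻¹ * ∫⁻ y in A, ∫⁻ z in B, ENNReal.ofReal |u y - u z| ∂ν ∂ν := by
    rw [key, abs_mul, abs_inv,
      abs_of_nonneg (by positivity : (0:ℝ) ≤ (ν A).toReal * (ν B).toReal),
      ENNReal.ofReal_mul (by positivity)]
    have h1 : ENNReal.ofReal (((ν A).toReal * (ν B).toReal)⁻¹) = (ν A * ν B)⁻¹ := by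
      rw [ENNReal.ofReal_inv_of_pos (by positivity), ENNReal.ofReal_mul ha.le,
        ENNReal.ofReal_toReal hAt, ENNReal.ofReal_toReal hBt]
    rw [h1]
    refine mul_le_mul_right ?_ _
    rw [← Real.enorm_eq_ofReal_abs]
    calc (‖∫ y in A, (∫ z in B, (u y - u z) ∂ν) ∂ν‖ₑ : ℝ≥0∞)
        ≤ ∫⁻ y in A, (‖∫ z in B, (u y - u z) ∂ν‖ₑ : ℝ≥0∞) ∂ν :=
          enorm_integral_le_lintegral_enorm _
      _ ≤ ∫⁻ y in A, ∫⁻ z in B, (‖u y - u z‖ₑ : ℝ≥0∞) ∂ν ∂ν :=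
          lintegral_mono fun y => enorm_integral_le_lintegral_enorm _
      _ = ∫⁻ y in A, ∫⁻ z in B, ENNReal.ofReal |u y - u z| ∂ν ∂ν :=
          lintegral_congr fun y => lintegral_congr fun z => Real.enorm_eq_ofReal_abs _
  -- step 3 : Hoelder
  set μA := ν.restrict A with hμA
  set μB := ν.restrict B with hμB
  set G : Z × Z → ℝ≥0∞ := fun a => ENNReal.ofReal |u a.1 - u a.2| with hGdef
  have hGm : AEMeasurable G (μA.prod μB) := by
    have h1 : AEMeasurable (fun a : Z × Z => u a.1) (μA.prod μB) := (hu_aem.restrict).comp_fst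
    have h2 : AEMeasurable (fun a : Z × Z => u a.2) (μA.prod μB) := (hu_aem.restrict).comp_snd
    exact ENNReal.measurable_ofReal.comp_aemeasurable
      (continuous_abs.measurable.comp_aemeasurable (h1.sub h2))
  have hGp : AEMeasurable (fun a => G a ^ p) (μA.prod μB) :=
    ENNReal.continuous_rpow_const.measurable.comp_aemeasurable hGm
  have prod_univ : (μA.prod μB) univ = ν A * ν B := by
    rw [← univ_prod_univ, Measure.prod_prod, hμA, hμB,
      Measure.restrict_apply_univ, Measure.restrict_apply_univ]
  have conv1 : ∫⁻ y in A, ∫⁻ z in B, ENNReal.ofReal |u y - u z| ∂ν ∂ν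
      = ∫⁻ a, G a ∂(μA.prod μB) := by
    have := lintegral_lintegral (μ := μA) (ν := μB)
      (f := fun y z => ENNReal.ofReal |u y - u z|) hGm
    exact this
  have conv2 : ∫⁻ a, G a ^ p ∂(μA.prod μB)
      = ∫⁻ y in A, ∫⁻ z in B, ENNReal.ofReal (|u y - u z| ^ p) ∂ν ∂ν := by
    have h := lintegral_lintegral (μ := μA) (ν := μB)
      (f := fun y z => ENNReal.ofReal |u y - u z| ^ p) hGp
    rw [← h]
    refine lintegral_congr fun y => lintegral_congr fun z => ?_
    rw [← ENNReal.ofReal_rpow_of_nonneg (abs_nonneg _) hp0.le]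
  have holder : ∫⁻ a, G a ∂(μA.prod μB)
      ≤ (∫⁻ a, G a ^ p ∂(μA.prod μB)) ^ (1/p) * (ν A * ν B) ^ (1/q) := by
    have h := ENNReal.lintegral_mul_le_Lp_mul_Lq (μA.prod μB) hpq hGm
      (aemeasurable_const : AEMeasurable (fun _ : Z × Z => (1:ℝ≥0∞)) _)
    simp only [Pi.mul_apply, mul_one, ENNReal.one_rpow, lintegral_const, one_mul] at h
    rw [prod_univ] at h
    exact h
  -- step 4 : combine
  set I := ∫⁻ y in A, ∫⁻ z in B, ENNReal.ofReal (|u y - u z| ^ p) ∂ν ∂ν with hI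
  have main : ENNReal.ofReal |(⨍ y in A, u y ∂ν) - ⨍ z in B, u z ∂ν|
      ≤ (ν A * ν B)⁻¹ * (I ^ (1/p) * (ν A * ν B) ^ (1/q)) := by
    refine le_trans habs (mul_le_mul_right ?_ _)
    rw [conv1]
    calc ∫⁻ a, G a ∂(μA.prod μB)
        ≤ (∫⁻ a, G a ^ p ∂(μA.prod μB)) ^ (1/p) * (ν A * ν B) ^ (1/q) := holder
      _ = I ^ (1/p) * (ν A * ν B) ^ (1/q) := by rw [conv2]
  have final := ENNReal.rpow_le_rpow main hp0.le
  have hx0 : ν A * ν B ≠ 0 := mul_ne_zero hA0 hB0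
  have hxt : ν A * ν B ≠ ⊤ := ENNReal.mul_ne_top hAt hBt
  rw [rpow_combine hpq hx0 hxt] at final
  exact final

end BCap
namespace BCap

open MeasureTheory Metric Set
open scoped ENNReal

variable {Z : Type*} [MetricSpace Z] [CompactSpace Z] [MeasurableSpace Z] [BorelSpace Z]

set_option linter.unusedSectionVars false

lemma dist_le_D (y z : Z) : dist y z ≤ Metric.diam (univ : Set Z) :=
  dist_le_diam_of_mem isCompact_univ.isBounded (mem_univ y) (mem_univ z)

lemma nonempty_of_diam_pos (h : 0 < Metric.diam (univ : Set Z)) : Nonempty Z := by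
  by_contra hne
  rw [not_nonempty_iff] at hne
  rw [univ_eq_empty_iff.2 hne] at h
  simp [Metric.diam_empty] at h

lemma ball_low {ν : Measure Z} {Q CA : ℝ} (hreg : IsAhlforsRegular ν Q CA) (hQ : 0 < Q)
    (hD0 : 0 < Metric.diam (univ : Set Z)) (x : Z) {r : ℝ} (hr : 0 < r)
    (hr8 : r ≤ 8 * Metric.diam (univ : Set Z)) :
    ENNReal.ofReal ((r / 8) ^ Q / CA) ≤ ν (ball x r) := by
  set D := Metric.diam (univ : Set Z) with hD
  have hmin : 0 < min r D := lt_min hr hD0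
  have h1 : min r D < 2 * D := lt_of_le_of_lt (min_le_right _ _) (by linarith)
  have h2 := (hreg.2 x _ hmin h1).1
  have hCA : 0 < CA := lt_of_lt_of_le zero_lt_one hreg.1
  refine le_trans ?_ (le_trans h2 (measure_mono (ball_subset_ball (min_le_left _ _))))
  apply ENNReal.ofReal_le_ofReal
  have h8 : r / 8 ≤ min r D := le_min (by linarith) (by linarith)
  have hnum : (r / 8) ^ Q ≤ (min r D) ^ Q :=
    Real.rpow_le_rpow (by positivity) h8 hQ.le
  rw [div_eq_mul_inv, div_eq_mul_inv]
  exact mul_le_mul_of_nonneg_right hnum (inv_nonneg.2 hCA.le)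

lemma ball_up {ν : Measure Z} {Q CA : ℝ} (hreg : IsAhlforsRegular ν Q CA)
    (hD0 : 0 < Metric.diam (univ : Set Z)) (x : Z) {r : ℝ} (hr : 0 < r)
    (hrD : r ≤ Metric.diam (univ : Set Z)) :
    ν (ball x r) ≤ ENNReal.ofReal (CA * r ^ Q) :=
  (hreg.2 x r hr (by linarith)).2

lemma ball_pos {ν : Measure Z} {Q CA : ℝ} (hreg : IsAhlforsRegular ν Q CA) (hQ : 0 < Q)
    (hD0 : 0 < Metric.diam (univ : Set Z)) (x : Z) {r : ℝ} (hr : 0 < r)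
    (hr8 : r ≤ 8 * Metric.diam (univ : Set Z)) : ν (ball x r) ≠ 0 := by
  have hCA : 0 < CA := lt_of_lt_of_le zero_lt_one hreg.1
  have h := ball_low hreg hQ hD0 x hr hr8
  intro h0
  rw [h0, le_zero_iff] at h
  have hpos : 0 < (r / 8) ^ Q / CA := by positivity
  exact absurd h (ne_of_gt (ENNReal.ofReal_pos.2 hpos))

lemma meas_univ_lt_top {ν : Measure Z} {Q CA : ℝ} (hreg : IsAhlforsRegular ν Q CA)
    (hD0 : 0 < Metric.diam (univ : Set Z)) : ν univ < ⊤ := by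
  obtain ⟨x⟩ := nonempty_of_diam_pos hD0
  set D := Metric.diam (univ : Set Z) with hDdef
  have hsub : (univ : Set Z) ⊆ ball x (3 / 2 * D) := by
    intro y _
    have := dist_le_D y x
    simp only [mem_ball]
    linarith
  calc ν univ ≤ ν (ball x (3 / 2 * D)) := measure_mono hsub
    _ ≤ ENNReal.ofReal (CA * (3 / 2 * D) ^ Q) :=
        (hreg.2 x _ (by linarith) (by linarith)).2
    _ < ⊤ := ENNReal.ofReal_lt_top

end BCap
namespace BCap

open MeasureTheory Metric Set
open scoped ENNReal

variable {Z : Type*} [MetricSpace Z] [CompactSpace Z] [MeasurableSpace Z] [BorelSpace Z]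

set_option linter.unusedSectionVars false
set_option linter.unusedVariables false

lemma ofReal_pow_le_ker {ν : Measure Z} {Q CA : ℝ} (hreg : IsAhlforsRegular ν Q CA)
    (hQ : 0 < Q) (hD0 : 0 < Metric.diam (univ : Set Z)) {p θ : ℝ} (hp0 : 0 < p)
    (hθp : 0 < θ * p) (u : Z → ℝ) {y z : Z} {r : ℝ} (hr : 0 < r) (hd : dist y z ≤ 2 * r) :
    ENNReal.ofReal (|u y - u z| ^ p)
      ≤ ENNReal.ofReal (CA * (2 * r) ^ (θ * p + Q)) *
        (ENNReal.ofReal (|u y - u z| ^ p / dist y z ^ (θ * p)) / ν (ball y (dist y z))) := by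
  have hCA : 0 < CA := lt_of_lt_of_le zero_lt_one hreg.1
  rcases eq_or_ne y z with rfl | hyz
  · simp [Real.zero_rpow (ne_of_gt hp0)]
  · have hd0 : 0 < dist y z := dist_pos.2 hyz
    set d := dist y z with hddef
    set ap := |u y - u z| ^ p with hap
    have hap0 : 0 ≤ ap := by rw [hap]; positivity
    have hdD : d ≤ Metric.diam (univ : Set Z) := dist_le_D y z
    have hup : ν (ball y d) ≤ ENNReal.ofReal (CA * d ^ Q) := ball_up hreg hD0 y hd0 hdD
    have hdE : d ^ (θ * p) * (CA * d ^ Q) = CA * d ^ (θ * p + Q) := by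
      rw [Real.rpow_add hd0]; ring
    have hineq : d ^ (θ * p + Q) ≤ (2 * r) ^ (θ * p + Q) :=
      Real.rpow_le_rpow hd0.le hd (by positivity)
    have key : CA * (2 * r) ^ (θ * p + Q) * (ap / d ^ (θ * p) / (CA * d ^ Q))
        = ap * ((2 * r) ^ (θ * p + Q) / d ^ (θ * p + Q)) := by
      rw [div_div, hdE]
      have h1 : CA ≠ 0 := ne_of_gt hCA
      have h2 : d ^ (θ * p + Q) ≠ 0 := ne_of_gt (Real.rpow_pos_of_pos hd0 _)
      field_simp
    have hreal : ap ≤ CA * (2 * r) ^ (θ * p + Q) * (ap / d ^ (θ * p) / (CA * d ^ Q)) := by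
      rw [key]
      have hquot : (1 : ℝ) ≤ (2 * r) ^ (θ * p + Q) / d ^ (θ * p + Q) :=
        (one_le_div (Real.rpow_pos_of_pos hd0 _)).2 hineq
      calc ap = ap * 1 := (mul_one _).symm
        _ ≤ ap * ((2 * r) ^ (θ * p + Q) / d ^ (θ * p + Q)) :=
            mul_le_mul_of_nonneg_left hquot hap0
    calc ENNReal.ofReal ap
        ≤ ENNReal.ofReal (CA * (2 * r) ^ (θ * p + Q) * (ap / d ^ (θ * p) / (CA * d ^ Q))) :=
          ENNReal.ofReal_le_ofReal hreal
      _ = ENNReal.ofReal (CA * (2 * r) ^ (θ * p + Q)) *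
            ENNReal.ofReal (ap / d ^ (θ * p) / (CA * d ^ Q)) :=
          ENNReal.ofReal_mul (by positivity)
      _ = ENNReal.ofReal (CA * (2 * r) ^ (θ * p + Q)) *
            (ENNReal.ofReal (ap / d ^ (θ * p)) / ENNReal.ofReal (CA * d ^ Q)) := by
          rw [ENNReal.ofReal_div_of_pos (by positivity)]
      _ ≤ ENNReal.ofReal (CA * (2 * r) ^ (θ * p + Q)) *
            (ENNReal.ofReal (ap / d ^ (θ * p)) / ν (ball y d)) :=
          mul_le_mul_right (ENNReal.div_le_div_left hup _) _

lemma double_pow_le {ν : Measure Z} {Q CA : ℝ} (hreg : IsAhlforsRegular ν Q CA)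
    (hQ : 0 < Q) (hD0 : 0 < Metric.diam (univ : Set Z)) {p θ : ℝ} (hp0 : 0 < p)
    (hθp : 0 < θ * p) (u : Z → ℝ) {w : Z} {r : ℝ} (hr : 0 < r) :
    ∫⁻ y in ball w r, ∫⁻ z in ball w r, ENNReal.ofReal (|u y - u z| ^ p) ∂ν ∂ν
      ≤ ENNReal.ofReal (CA * (2 * r) ^ (θ * p + Q)) * EN ν θ p u (ball w r) := by
  set c := ENNReal.ofReal (CA * (2 * r) ^ (θ * p + Q)) with hc
  set K : Z → Z → ℝ≥0∞ := fun y z =>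
    ENNReal.ofReal (|u y - u z| ^ p / dist y z ^ (θ * p)) / ν (ball y (dist y z)) with hK
  have hptwise : ∀ y ∈ ball w r, ∀ z ∈ ball w r,
      ENNReal.ofReal (|u y - u z| ^ p) ≤ c * K y z := by
    intro y hy z hz
    have hd : dist y z ≤ 2 * r := by
      have h1 := mem_ball.1 hy
      have h2 := mem_ball.1 hz
      calc dist y z ≤ dist y w + dist w z := dist_triangle _ _ _
        _ ≤ 2 * r := by rw [dist_comm w z] at *; linarith
    exact ofReal_pow_le_ker hreg hQ hD0 hp0 hθp u hr hd
  calc ∫⁻ y in ball w r, ∫⁻ z in ball w r, ENNReal.ofReal (|u y - u z| ^ p) ∂ν ∂ν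
      ≤ ∫⁻ y in ball w r, (∫⁻ z in ball w r, c * K y z ∂ν) ∂ν := by
        refine setLIntegral_mono' measurableSet_ball fun y hy => ?_
        exact setLIntegral_mono' measurableSet_ball fun z hz => hptwise y hy z hz
    _ = ∫⁻ y in ball w r, c * (∫⁻ z in ball w r, K y z ∂ν) ∂ν := by
        refine lintegral_congr fun y => lintegral_const_mul' c _ ENNReal.ofReal_ne_top
    _ = c * EN ν θ p u (ball w r) := lintegral_const_mul' c _ ENNReal.ofReal_ne_top

lemma step_bound {ν : Measure Z} [IsFiniteMeasure ν] {Q CA : ℝ}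
    (hreg : IsAhlforsRegular ν Q CA) (hQ : 0 < Q)
    (hD0 : 0 < Metric.diam (univ : Set Z)) {p θ : ℝ} (hp1 : 1 < p) (hθp : 0 < θ * p)
    {u : Z → ℝ} (hu_int : Integrable u ν) (hu_aem : AEMeasurable u ν)
    {x' w : Z} {r : ℝ} (hr : 0 < r) (hr8 : r ≤ 8 * Metric.diam (univ : Set Z))
    (hsub : ball x' (r / 2) ⊆ ball w r) :
    ENNReal.ofReal |(⨍ y in ball x' (r / 2), u y ∂ν) - ⨍ z in ball w r, u z ∂ν| ^ p
      ≤ ENNReal.ofReal (CA ^ (3 : ℕ) * 16 ^ Q * 8 ^ Q * 2 ^ (θ * p + Q) * r ^ (θ * p - Q)) *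
        EN ν θ p u (ball w r) := by
  have hCA : 0 < CA := lt_of_lt_of_le zero_lt_one hreg.1
  have hp0 : (0 : ℝ) < p := lt_trans zero_lt_one hp1
  set A := ball x' (r / 2) with hA
  set B := ball w r with hB
  have hA0 : ν A ≠ 0 := ball_pos hreg hQ hD0 x' (by linarith) (by linarith)
  have hB0 : ν B ≠ 0 := ball_pos hreg hQ hD0 w hr hr8
  have step1 := avg_diff_bound ν hp1 hu_int hu_aem measurableSet_ball measurableSet_ball hA0 hB0
  have step2 : ∫⁻ y in A, ∫⁻ z in B, ENNReal.ofReal (|u y - u z| ^ p) ∂ν ∂ν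
      ≤ ∫⁻ y in B, ∫⁻ z in B, ENNReal.ofReal (|u y - u z| ^ p) ∂ν ∂ν :=
    lintegral_mono' (Measure.restrict_mono hsub le_rfl) le_rfl
  have step3 := double_pow_le hreg hQ hD0 hp0 hθp u (w := w) hr
  -- measure lower bounds
  set oa := ENNReal.ofReal ((r / 2 / 8) ^ Q / CA) with hoa
  set ob := ENNReal.ofReal ((r / 8) ^ Q / CA) with hob
  have hoa_le : oa ≤ ν A := ball_low hreg hQ hD0 x' (by linarith) (by linarith)
  have hob_le : ob ≤ ν B := ball_low hreg hQ hD0 w hr hr8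
  have hinv : (ν A * ν B)⁻¹ ≤ (oa * ob)⁻¹ :=
    ENNReal.inv_le_inv' (mul_le_mul' hoa_le hob_le)
  set e := (r / 2 / 8) ^ Q / CA * ((r / 8) ^ Q / CA) with he
  have he0 : 0 < e := by rw [he]; positivity
  have hoaob : oa * ob = ENNReal.ofReal e := by
    rw [hoa, hob, he, ENNReal.ofReal_mul (by positivity)]
  -- the real identity
  set KK := CA ^ (3 : ℕ) * 16 ^ Q * 8 ^ Q * 2 ^ (θ * p + Q) * r ^ (θ * p - Q) with hKK
  have hKK0 : 0 < KK := by rw [hKK]; positivity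
  have hid : CA * (2 * r) ^ (θ * p + Q) = KK * e := by
    rw [hKK, he]
    have e1 : (r / 2 / 8 : ℝ) ^ Q = r ^ Q / 16 ^ Q := by
      rw [show (r / 2 / 8 : ℝ) = r / 16 by ring, Real.div_rpow hr.le (by norm_num)]
    have e2 : (r / 8 : ℝ) ^ Q = r ^ Q / 8 ^ Q := Real.div_rpow hr.le (by norm_num : (0:ℝ) ≤ 8) Q
    have e3 : (2 * r) ^ (θ * p + Q) = 2 ^ (θ * p + Q) * r ^ (θ * p + Q) :=
      Real.mul_rpow (by norm_num) hr.le
    have e4 : r ^ (θ * p - Q) * r ^ Q * r ^ Q = r ^ (θ * p + Q) := by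
      rw [← Real.rpow_add hr, ← Real.rpow_add hr]
      ring_nf
    rw [e1, e2, e3]
    have h16 : (16 : ℝ) ^ Q ≠ 0 := ne_of_gt (Real.rpow_pos_of_pos (by norm_num) _)
    have h8 : (8 : ℝ) ^ Q ≠ 0 := ne_of_gt (Real.rpow_pos_of_pos (by norm_num) _)
    have hCAne : CA ≠ 0 := ne_of_gt hCA
    field_simp
    rw [← e4]
    ring
  -- assemble
  calc ENNReal.ofReal |(⨍ y in A, u y ∂ν) - ⨍ z in B, u z ∂ν| ^ p
      ≤ (ν A * ν B)⁻¹ * ∫⁻ y in A, ∫⁻ z in B, ENNReal.ofReal (|u y - u z| ^ p) ∂ν ∂ν := step1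
    _ ≤ (oa * ob)⁻¹ * (ENNReal.ofReal (CA * (2 * r) ^ (θ * p + Q)) * EN ν θ p u B) :=
        mul_le_mul' hinv (le_trans step2 step3)
    _ = ENNReal.ofReal KK * EN ν θ p u B := by
        rw [hoaob, hid, ENNReal.ofReal_mul hKK0.le, mul_comm (ENNReal.ofReal KK),
          mul_assoc, ← mul_assoc (ENNReal.ofReal e)⁻¹,
          ENNReal.inv_mul_cancel (ne_of_gt (ENNReal.ofReal_pos.2 he0)) ENNReal.ofReal_ne_top,
          one_mul]

end BCap
namespace BCap

open MeasureTheory Metric Set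
open scoped ENNReal

variable {Z : Type*} [MetricSpace Z] [CompactSpace Z] [MeasurableSpace Z] [BorelSpace Z]

set_option linter.unusedSectionVars false
set_option linter.unusedVariables false

noncomputable def K1 (CA Q p θ : ℝ) : ℝ := CA ^ (3 : ℕ) * 16 ^ Q * 8 ^ Q * 2 ^ (θ * p + Q)

noncomputable def gam (Q s p θ : ℝ) : ℝ := (2 : ℝ)⁻¹ ^ ((s + θ * p - Q) / p)

noncomputable def Mc (Q s p θ : ℝ) : ℝ := 1 + (1 - gam Q s p θ)⁻¹

noncomputable def kap (CA Q s p θ : ℝ) : ℝ :=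
  (4 * Mc Q s p θ)⁻¹ ^ p / (K1 CA Q p θ * 4 ^ (θ * p - Q))

lemma gam_pos (Q s p θ : ℝ) : 0 < gam Q s p θ :=
  Real.rpow_pos_of_pos (by norm_num) _

lemma gam_lt_one {Q s p θ : ℝ} (hp0 : 0 < p) (hσ : 0 < s + θ * p - Q) : gam Q s p θ < 1 :=
  Real.rpow_lt_one (by norm_num) (by norm_num) (by positivity)

lemma Mc_pos {Q s p θ : ℝ} (hp0 : 0 < p) (hσ : 0 < s + θ * p - Q) : 1 < Mc Q s p θ := by
  have h1 : 0 < 1 - gam Q s p θ := by linarith [gam_lt_one hp0 hσ]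
  have := inv_pos.2 h1
  unfold Mc; linarith

lemma K1_pos {CA Q p θ : ℝ} (hCA : 0 < CA) : 0 < K1 CA Q p θ := by
  unfold K1; positivity

lemma kap_pos {CA Q s p θ : ℝ} (hCA : 0 < CA) (hp0 : 0 < p) (hσ : 0 < s + θ * p - Q) :
    0 < kap CA Q s p θ := by
  have h1 := K1_pos (CA := CA) (Q := Q) (p := p) (θ := θ) hCA
  have h2 : 0 < Mc Q s p θ := lt_trans zero_lt_one (Mc_pos hp0 hσ)
  unfold kap; positivity

lemma one_le_avg {ν : Measure Z} [IsFiniteMeasure ν] {u : Z → ℝ} (hu_int : Integrable u ν)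
    {B : Set Z} (hB : MeasurableSet B) (h0 : ν B ≠ 0) (h1 : ∀ y ∈ B, (1 : ℝ) ≤ u y) :
    1 ≤ ⨍ y in B, u y ∂ν := by
  have ht : 0 < (ν B).toReal := ENNReal.toReal_pos h0 (measure_ne_top ν B)
  have hint := setIntegral_ge_of_const_le_real hB (measure_ne_top ν B) h1 hu_int.integrableOn
  rw [one_mul] at hint
  rw [setAverage_eq, smul_eq_mul]
  calc (1 : ℝ) = (ν B).toReal⁻¹ * (ν B).toReal := (inv_mul_cancel₀ ht.ne').symm
    _ ≤ (ν B).toReal⁻¹ * ∫ y in B, u y ∂ν :=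
        mul_le_mul_of_nonneg_left hint (inv_nonneg.2 ht.le)

lemma telescope {ν : Measure Z} [IsFiniteMeasure ν] {Q CA s p θ : ℝ}
    (hreg : IsAhlforsRegular ν Q CA) (hQ : 0 < Q)
    (hD0 : 0 < Metric.diam (univ : Set Z)) (hp1 : 1 < p) (hθp : 0 < θ * p)
    (hσ : 0 < s + θ * p - Q) (hs0 : 0 < s)
    {u : Z → ℝ} (hu_int : Integrable u ν) (hu_aem : AEMeasurable u ν)
    {x₀ x : Z} {R₁ : ℝ} (hR₁ : 0 < R₁) (hR₁D : R₁ ≤ 2 * Metric.diam (univ : Set Z))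
    (hxx₀ : dist x x₀ < R₁)
    {U : Set Z} (hUopen : IsOpen U) (hxU : x ∈ U) (hU1 : ∀ y ∈ U, 1 ≤ u y)
    (hm : (⨍ z in ball x₀ (2 * R₁), u z ∂ν) ≤ 1 / 2) :
    ∃ ρ : ℝ, 0 < ρ ∧ ρ ≤ 4 * R₁ ∧
      ENNReal.ofReal (kap CA Q s p θ / 4 ^ s * ρ ^ s * R₁ ^ (Q - θ * p - s))
        ≤ EN ν θ p u (ball x ρ) := by
  by_contra hcon
  push_neg at hcon
  set D := Metric.diam (univ : Set Z) with hD
  have hp0 : (0 : ℝ) < p := lt_trans zero_lt_one hp1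
  have hCA : 0 < CA := lt_of_lt_of_le zero_lt_one hreg.1
  set σ := s + θ * p - Q with hσdef
  set γ := gam Q s p θ with hγdef
  have hγ0 : 0 < γ := gam_pos Q s p θ
  have hγ1 : γ < 1 := gam_lt_one hp0 hσ
  set M := Mc Q s p θ with hMdef
  have hM1 : 1 < M := Mc_pos hp0 hσ
  have hM0 : 0 < M := lt_trans zero_lt_one hM1
  set κ := kap CA Q s p θ with hκdef
  have hκ0 : 0 < κ := kap_pos hCA hp0 hσ
  have hK10 : 0 < K1 CA Q p θ := K1_pos hCA
  -- radii
  set r : ℕ → ℝ := fun j => 4 * R₁ * (2 : ℝ)⁻¹ ^ j with hrdef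
  have hrpos : ∀ j, 0 < r j := fun j => by rw [hrdef]; positivity
  have hrle : ∀ j, r j ≤ 4 * R₁ := by
    intro j
    rw [hrdef]
    calc 4 * R₁ * (2 : ℝ)⁻¹ ^ j ≤ 4 * R₁ * 1 := by
          refine mul_le_mul_of_nonneg_left ?_ (by linarith)
          exact pow_le_one₀ (by norm_num) (by norm_num)
      _ = 4 * R₁ := mul_one _
  have hr8 : ∀ j, r j ≤ 8 * D := fun j => le_trans (hrle j) (by linarith)
  have hrsucc : ∀ j, r (j + 1) = r j / 2 := by
    intro j
    rw [hrdef]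
    simp only [pow_succ]
    ring
  set a : ℕ → ℝ := fun j => ⨍ z in ball x (r j), u z ∂ν with hadef
  set m := ⨍ z in ball x₀ (2 * R₁), u z ∂ν with hmdef
  have hEN : ∀ j, EN ν θ p u (ball x (r j))
      < ENNReal.ofReal (κ / 4 ^ s * (r j) ^ s * R₁ ^ (Q - θ * p - s)) :=
    fun j => hcon (r j) (hrpos j) (hrle j)
  -- the numeric identity
  have hWnum : ∀ j : ℕ, K1 CA Q p θ * (r j) ^ (θ * p - Q) *
      (κ / 4 ^ s * (r j) ^ s * R₁ ^ (Q - θ * p - s)) = ((4 * M)⁻¹ * γ ^ j) ^ p := by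
    intro j
    have hrj : 0 < r j := hrpos j
    have h1 : (r j) ^ (θ * p - Q) * (r j) ^ s = (r j) ^ σ := by
      rw [← Real.rpow_add hrj]; congr 1; rw [hσdef]; ring
    have h2 : (r j) ^ σ = (4 * R₁) ^ σ * ((2 : ℝ)⁻¹ ^ j) ^ σ := by
      rw [hrdef]
      exact Real.mul_rpow (by positivity) (by positivity)
    have h3 : (4 * R₁ : ℝ) ^ σ = 4 ^ σ * R₁ ^ σ := Real.mul_rpow (by norm_num) hR₁.le
    have h5 : (4 : ℝ) ^ σ = 4 ^ (θ * p - Q) * 4 ^ s := by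
      rw [← Real.rpow_add (by norm_num : (0:ℝ) < 4)]
      congr 1; rw [hσdef]; ring
    have h4' : R₁ ^ (Q - θ * p - s) = (R₁ ^ σ)⁻¹ := by
      rw [show Q - θ * p - s = -σ by rw [hσdef]; ring, Real.rpow_neg hR₁.le]
    have h6 : (((2 : ℝ)⁻¹ ^ j : ℝ)) ^ σ = (γ ^ j) ^ p := by
      rw [← Real.rpow_natCast ((2 : ℝ)⁻¹) j, ← Real.rpow_natCast γ j, hγdef]
      simp only [gam]
      rw [← Real.rpow_mul (by norm_num : (0:ℝ) ≤ 2⁻¹),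
        ← Real.rpow_mul (by norm_num : (0:ℝ) ≤ 2⁻¹),
        ← Real.rpow_mul (by norm_num : (0:ℝ) ≤ 2⁻¹)]
      congr 1
      rw [hσdef]
      field_simp
    have h7 : κ * (K1 CA Q p θ * 4 ^ (θ * p - Q)) = (4 * M)⁻¹ ^ p := by
      rw [hκdef, hMdef]
      unfold kap
      have hne : K1 CA Q p θ * (4:ℝ) ^ (θ * p - Q) ≠ 0 := by positivity
      field_simp
    have h4s : (4 : ℝ) ^ s ≠ 0 := ne_of_gt (Real.rpow_pos_of_pos (by norm_num) _)
    have hR₁σ : (0 : ℝ) < R₁ ^ σ := Real.rpow_pos_of_pos hR₁ _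
    have hrhs : ((4 * M)⁻¹ * γ ^ j) ^ p = (4 * M)⁻¹ ^ p * (γ ^ j) ^ p :=
      Real.mul_rpow (by positivity) (by positivity)
    have hlhs : K1 CA Q p θ * r j ^ (θ * p - Q) * (κ / 4 ^ s * r j ^ s * R₁ ^ (Q - θ * p - s))
        = K1 CA Q p θ * (κ / 4 ^ s) * R₁ ^ (Q - θ * p - s) * (r j ^ (θ * p - Q) * r j ^ s) := by
      ring
    rw [hlhs, h1, h2, h3, h5, h4', hrhs, ← h7, ← h6]
    field_simp
  -- step estimates
  have haj : ∀ j, a j = ⨍ z in ball x (r j), u z ∂ν := fun j => rfl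
  have hstep : ∀ j : ℕ, |a (j + 1) - a j| ≤ (4 * M)⁻¹ * γ ^ j := by
    intro j
    have hsub : ball x (r j / 2) ⊆ ball x (r j) :=
      ball_subset_ball (by linarith [hrpos j])
    have hsb := step_bound hreg hQ hD0 hp1 hθp hu_int hu_aem (x' := x) (w := x)
      (hrpos j) (hr8 j) hsub
    rw [← hrsucc j] at hsb
    have hcomb : ENNReal.ofReal (|a (j + 1) - a j| ^ p)
        ≤ ENNReal.ofReal (((4 * M)⁻¹ * γ ^ j) ^ p) := by
      rw [← ENNReal.ofReal_rpow_of_nonneg (abs_nonneg _) hp0.le]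
      calc ENNReal.ofReal |a (j + 1) - a j| ^ p
          ≤ ENNReal.ofReal (CA ^ (3:ℕ) * 16 ^ Q * 8 ^ Q * 2 ^ (θ * p + Q) * (r j) ^ (θ * p - Q)) *
            EN ν θ p u (ball x (r j)) := hsb
        _ ≤ ENNReal.ofReal (CA ^ (3:ℕ) * 16 ^ Q * 8 ^ Q * 2 ^ (θ * p + Q) * (r j) ^ (θ * p - Q)) *
            ENNReal.ofReal (κ / 4 ^ s * (r j) ^ s * R₁ ^ (Q - θ * p - s)) :=
            mul_le_mul_right (hEN j).le _
        _ = ENNReal.ofReal (K1 CA Q p θ * (r j) ^ (θ * p - Q) *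
              (κ / 4 ^ s * (r j) ^ s * R₁ ^ (Q - θ * p - s))) := by
            rw [← ENNReal.ofReal_mul (by positivity)]
            exact congrArg ENNReal.ofReal (by unfold K1; ring)
        _ = ENNReal.ofReal (((4 * M)⁻¹ * γ ^ j) ^ p) := by rw [hWnum j]
    have hreal : |a (j + 1) - a j| ^ p ≤ ((4 * M)⁻¹ * γ ^ j) ^ p :=
      (ENNReal.ofReal_le_ofReal_iff (by positivity)).1 hcomb
    by_contra hgt
    push_neg at hgt
    have := Real.rpow_lt_rpow (by positivity) hgt hp0
    linarith
  have hbase : |a 0 - m| ≤ (4 * M)⁻¹ := by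
    have hsub : ball x₀ (r 0 / 2) ⊆ ball x (r 0) := by
      intro z hz
      rw [mem_ball] at hz ⊢
      have h40 : r 0 = 4 * R₁ := by rw [hrdef]; simp
      have hd := dist_triangle z x₀ x
      rw [dist_comm x x₀] at hxx₀
      rw [h40] at hz ⊢
      have : r 0 / 2 = 2 * R₁ := by rw [h40]; ring
      linarith [hz, hxx₀]
    have hsb := step_bound hreg hQ hD0 hp1 hθp hu_int hu_aem (x' := x₀) (w := x)
      (hrpos 0) (hr8 0) hsub
    have h02 : r 0 / 2 = 2 * R₁ := by rw [hrdef]; simp; ring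
    rw [h02] at hsb
    have hcomb : ENNReal.ofReal (|m - a 0| ^ p)
        ≤ ENNReal.ofReal (((4 * M)⁻¹ * γ ^ 0) ^ p) := by
      rw [← ENNReal.ofReal_rpow_of_nonneg (abs_nonneg _) hp0.le]
      calc ENNReal.ofReal |m - a 0| ^ p
          ≤ ENNReal.ofReal (CA ^ (3:ℕ) * 16 ^ Q * 8 ^ Q * 2 ^ (θ * p + Q) * (r 0) ^ (θ * p - Q)) *
            EN ν θ p u (ball x (r 0)) := hsb
        _ ≤ ENNReal.ofReal (CA ^ (3:ℕ) * 16 ^ Q * 8 ^ Q * 2 ^ (θ * p + Q) * (r 0) ^ (θ * p - Q)) *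
            ENNReal.ofReal (κ / 4 ^ s * (r 0) ^ s * R₁ ^ (Q - θ * p - s)) :=
            mul_le_mul_right (hEN 0).le _
        _ = ENNReal.ofReal (K1 CA Q p θ * (r 0) ^ (θ * p - Q) *
              (κ / 4 ^ s * (r 0) ^ s * R₁ ^ (Q - θ * p - s))) := by
            rw [← ENNReal.ofReal_mul (by positivity)]
            exact congrArg ENNReal.ofReal (by unfold K1; ring)
        _ = ENNReal.ofReal (((4 * M)⁻¹ * γ ^ 0) ^ p) := by rw [hWnum 0]
    have hreal : |m - a 0| ^ p ≤ ((4 * M)⁻¹ * γ ^ 0) ^ p :=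
      (ENNReal.ofReal_le_ofReal_iff (by positivity)).1 hcomb
    rw [pow_zero, mul_one] at hreal
    rw [abs_sub_comm]
    by_contra hgt
    push_neg at hgt
    have := Real.rpow_lt_rpow (by positivity) hgt hp0
    linarith
  -- find J with ball x (r J) ⊆ U
  obtain ⟨ε, hε0, hεU⟩ := Metric.isOpen_iff.1 hUopen x hxU
  obtain ⟨J, hJlt⟩ : ∃ J : ℕ, (2 : ℝ)⁻¹ ^ J < ε / (4 * R₁) :=
    exists_pow_lt_of_lt_one (by positivity) (by norm_num)
  have hrJ : r J < ε := by
    rw [hrdef]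
    calc 4 * R₁ * (2 : ℝ)⁻¹ ^ J < 4 * R₁ * (ε / (4 * R₁)) :=
        mul_lt_mul_of_pos_left hJlt (by linarith)
      _ = ε := by field_simp
  have hBJU : ball x (r J) ⊆ U := subset_trans (ball_subset_ball hrJ.le) hεU
  have haJ : 1 ≤ a J :=
    one_le_avg hu_int measurableSet_ball
      (ball_pos hreg hQ hD0 x (hrpos J) (hr8 J)) (fun y hy => hU1 y (hBJU hy))
  -- telescoping contradiction
  have hsum : a J - a 0 = ∑ j ∈ Finset.range J, (a (j + 1) - a j) :=
    (Finset.sum_range_sub a J).symm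
  have htri : a J - m ≤ |a 0 - m| + ∑ j ∈ Finset.range J, |a (j + 1) - a j| := by
    have h1 : a J - m = (∑ j ∈ Finset.range J, (a (j + 1) - a j)) + (a 0 - m) := by
      rw [← hsum]; ring
    rw [h1]
    have h2 : ∑ j ∈ Finset.range J, (a (j + 1) - a j)
        ≤ ∑ j ∈ Finset.range J, |a (j + 1) - a j| :=
      Finset.sum_le_sum fun i _ => le_abs_self _
    have h3 : a 0 - m ≤ |a 0 - m| := le_abs_self _
    linarith
  have hgeom : ∑ j ∈ Finset.range J, γ ^ j ≤ (1 - γ)⁻¹ := by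
    have hγne : γ ≠ 1 := ne_of_lt hγ1
    rw [geom_sum_eq hγne]
    have h1γ : 0 < 1 - γ := by linarith
    have heq : (γ ^ J - 1) / (γ - 1) = (1 - γ ^ J) * (1 - γ)⁻¹ := by
      rw [div_eq_mul_inv]
      have : (γ - 1)⁻¹ = -(1 - γ)⁻¹ := by
        rw [show γ - 1 = -(1 - γ) by ring, neg_inv]
      rw [this]
      ring
    rw [heq]
    have hpow : 0 ≤ γ ^ J := pow_nonneg hγ0.le J
    calc (1 - γ ^ J) * (1 - γ)⁻¹ ≤ 1 * (1 - γ)⁻¹ :=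
        mul_le_mul_of_nonneg_right (by linarith) (inv_nonneg.2 h1γ.le)
      _ = (1 - γ)⁻¹ := one_mul _
  have hsumbound : ∑ j ∈ Finset.range J, |a (j + 1) - a j| ≤ (4 * M)⁻¹ * (1 - γ)⁻¹ := by
    calc ∑ j ∈ Finset.range J, |a (j + 1) - a j|
        ≤ ∑ j ∈ Finset.range J, (4 * M)⁻¹ * γ ^ j :=
        Finset.sum_le_sum fun i _ => hstep i
      _ = (4 * M)⁻¹ * ∑ j ∈ Finset.range J, γ ^ j := by rw [Finset.mul_sum]
      _ ≤ (4 * M)⁻¹ * (1 - γ)⁻¹ :=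
        mul_le_mul_of_nonneg_left hgeom (by positivity)
  have hfinal : (1 : ℝ) / 2 ≤ (4 * M)⁻¹ * M := by
    have hMeq : (4 * M)⁻¹ + (4 * M)⁻¹ * (1 - γ)⁻¹ = (4 * M)⁻¹ * M := by
      rw [hMdef]
      unfold Mc
      rw [← hγdef]
      ring
    have := htri
    have h12 : (1 : ℝ) / 2 ≤ a J - m := by linarith
    linarith [hbase, hsumbound]
  have : (4 * M)⁻¹ * M = 4⁻¹ := by field_simp
  rw [this] at hfinal
  norm_num at hfinal

end BCap
namespace BCap

open MeasureTheory Metric Set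
open scoped ENNReal

variable {Z : Type*} [MetricSpace Z] [CompactSpace Z] [MeasurableSpace Z] [BorelSpace Z]

set_option linter.unusedSectionVars false
set_option linter.unusedVariables false

example : TopologicalSpace.SeparableSpace Z := inferInstance

lemma content_bound {ν : Measure Z} {s p θ c' : ℝ} (hs0 : 0 < s) (hc' : 0 < c')
    [Nonempty Z] {u : Z → ℝ} {E : Set Z} {R₄ : ℝ}
    (h : ∀ x ∈ E, ∃ ρ : ℝ, 0 < ρ ∧ ρ ≤ R₄ ∧
        ENNReal.ofReal (c' * ρ ^ s) ≤ EN ν θ p u (ball x ρ)) :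
    hausdorffContent s E ≤ ENNReal.ofReal ((8 : ℝ) ^ s / c') * besovEnergy ν θ p u := by
  classical
  choose! ρ hρ0 hρle hρEN using h
  obtain ⟨t, htE, hdisj, hcov⟩ := Vitali.exists_disjoint_subfamily_covering_enlargement
    (fun x : Z => closedBall x (ρ x)) E ρ 2 (by norm_num)
    (fun x hx => (hρ0 x hx).le) R₄ (fun x hx => hρle x hx)
    (fun x hx => ⟨x, mem_closedBall_self (hρ0 x hx).le⟩)
  have hcnt : t.Countable := by
    refine hdisj.countable_of_nonempty_interior fun b hb => ?_
    have hρb : 0 < ρ b := hρ0 b (htE hb)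
    exact ⟨b, interior_maximal ball_subset_closedBall isOpen_ball (mem_ball_self hρb)⟩
  have hEcov : ∀ x ∈ E, ∃ b ∈ t, x ∈ ball b (4 * ρ b) := by
    intro x hx
    obtain ⟨b, hbt, hinter, hle⟩ := hcov x hx
    obtain ⟨w, hw1, hw2⟩ := hinter
    refine ⟨b, hbt, ?_⟩
    rw [mem_ball]
    have h1 : dist w x ≤ ρ x := mem_closedBall.1 hw1
    have h2 : dist w b ≤ ρ b := mem_closedBall.1 hw2
    have hρb : 0 < ρ b := hρ0 b (htE hbt)
    have hρx : 0 ≤ ρ x := (hρ0 x hx).le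
    calc dist x b ≤ dist x w + dist w b := dist_triangle _ _ _
      _ ≤ ρ x + ρ b := by rw [dist_comm x w]; linarith
      _ ≤ 2 * ρ b + ρ b := by linarith
      _ < 4 * ρ b := by linarith
  obtain ⟨f, hf⟩ : ∃ f : t → ℕ, Function.Injective f :=
    Set.countable_iff_exists_injective.1 hcnt
  obtain ⟨z₀⟩ := ‹Nonempty Z›
  set cc : ℕ → Z := fun n => if h : ∃ b : t, f b = n then (h.choose : Z) else z₀ with hcc
  set rr : ℕ → ℝ := fun n => if h : ∃ b : t, f b = n then 4 * ρ (h.choose : Z) else 0 with hrr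
  have hcover : E ⊆ ⋃ n, ball (cc n) (rr n) := by
    intro x hx
    obtain ⟨b, hbt, hxb⟩ := hEcov x hx
    refine mem_iUnion.2 ⟨f ⟨b, hbt⟩, ?_⟩
    have hex : ∃ b' : t, f b' = f ⟨b, hbt⟩ := ⟨⟨b, hbt⟩, rfl⟩
    have heq : hex.choose = ⟨b, hbt⟩ := hf hex.choose_spec
    simp only [hcc, hrr]
    rw [dif_pos hex, dif_pos hex, heq]
    exact hxb
  have hcontent : hausdorffContent s E
      ≤ ∑' n, ENNReal.ofReal (Metric.diam (ball (cc n) (rr n)) ^ s) := by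
    unfold hausdorffContent
    exact iInf_le_of_le cc (iInf_le_of_le rr (iInf_le _ hcover))
  set T : ℕ → ℝ≥0∞ := fun n => if h : ∃ b : t, f b = n
      then ENNReal.ofReal ((8 : ℝ) ^ s / c') *
        EN ν θ p u (ball (h.choose : Z) (ρ (h.choose : Z))) else 0 with hT
  have hterm : ∀ n, ENNReal.ofReal (Metric.diam (ball (cc n) (rr n)) ^ s) ≤ T n := by
    intro n
    by_cases hex : ∃ b : t, f b = n
    · have hbt : (hex.choose : Z) ∈ t := (hex.choose).2
      have hbE : (hex.choose : Z) ∈ E := htE hbt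
      have hρb : 0 < ρ (hex.choose : Z) := hρ0 _ hbE
      simp only [hT, hcc, hrr]
      rw [dif_pos hex, dif_pos hex, dif_pos hex]
      set b : Z := (hex.choose : Z)
      have hdi : Metric.diam (ball b (4 * ρ b)) ≤ 8 * ρ b := by
        calc Metric.diam (ball b (4 * ρ b)) ≤ 2 * (4 * ρ b) := diam_ball (by linarith)
          _ = 8 * ρ b := by ring
      have h1 : (Metric.diam (ball b (4 * ρ b))) ^ s ≤ (8 * ρ b) ^ s :=
        Real.rpow_le_rpow Metric.diam_nonneg hdi hs0.le
      have h2 : (8 * ρ b) ^ s = (8 : ℝ) ^ s / c' * (c' * ρ b ^ s) := by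
        rw [Real.mul_rpow (by norm_num) hρb.le]
        field_simp
      calc ENNReal.ofReal (Metric.diam (ball b (4 * ρ b)) ^ s)
          ≤ ENNReal.ofReal ((8 : ℝ) ^ s / c' * (c' * ρ b ^ s)) := by
            rw [← h2]; exact ENNReal.ofReal_le_ofReal h1
        _ = ENNReal.ofReal ((8 : ℝ) ^ s / c') * ENNReal.ofReal (c' * ρ b ^ s) :=
            ENNReal.ofReal_mul (by positivity)
        _ ≤ ENNReal.ofReal ((8 : ℝ) ^ s / c') * EN ν θ p u (ball b (ρ b)) :=
            mul_le_mul_right (hρEN _ hbE) _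
    · simp only [hT, hcc, hrr]
      rw [dif_neg hex, dif_neg hex, dif_neg hex]
      simp [Metric.ball_zero, Real.zero_rpow (ne_of_gt hs0)]
  haveI := hcnt.to_subtype
  have htsum : ∑' n, T n
      = ∑' b : t, ENNReal.ofReal ((8 : ℝ) ^ s / c') * EN ν θ p u (ball (b : Z) (ρ (b : Z))) := by
    have hsupp : Function.support T ⊆ Set.range f := by
      intro n hn
      by_contra hnr
      apply hn
      have hnex : ¬∃ b : t, f b = n := by
        intro ⟨b, hb⟩; exact hnr ⟨b, hb⟩
      simp only [hT]
      rw [dif_neg hnex]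
    rw [← Function.Injective.tsum_eq hf hsupp]
    refine tsum_congr fun b => ?_
    have hex : ∃ b' : t, f b' = f b := ⟨b, rfl⟩
    simp only [hT]
    rw [dif_pos hex]
    have heq : hex.choose = b := hf hex.choose_spec
    rw [heq]
  have hEsum : ∑' b : t, EN ν θ p u (ball (b : Z) (ρ (b : Z))) ≤ besovEnergy ν θ p u := by
    refine tsum_EN_le ν θ p u (fun b : t => ball (b : Z) (ρ (b : Z)))
      (fun b => measurableSet_ball) ?_
    intro b b' hne
    have hcoene : (b : Z) ≠ (b' : Z) := fun hc => hne (Subtype.coe_injective hc)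
    have hd := hdisj b.2 b'.2 hcoene
    exact Set.disjoint_of_subset ball_subset_closedBall ball_subset_closedBall hd
  calc hausdorffContent s E
      ≤ ∑' n, ENNReal.ofReal (Metric.diam (ball (cc n) (rr n)) ^ s) := hcontent
    _ ≤ ∑' n, T n := ENNReal.tsum_le_tsum hterm
    _ = ∑' b : t, ENNReal.ofReal ((8 : ℝ) ^ s / c') * EN ν θ p u (ball (b : Z) (ρ (b : Z))) :=
        htsum
    _ = ENNReal.ofReal ((8 : ℝ) ^ s / c') *
        ∑' b : t, EN ν θ p u (ball (b : Z) (ρ (b : Z))) := ENNReal.tsum_mul_left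
    _ ≤ ENNReal.ofReal ((8 : ℝ) ^ s / c') * besovEnergy ν θ p u :=
        mul_le_mul_right hEsum _

end BCap
namespace BCap

open MeasureTheory Metric Set
open scoped ENNReal

variable {Z : Type*} [MetricSpace Z] [CompactSpace Z] [MeasurableSpace Z] [BorelSpace Z]

set_option linter.unusedSectionVars false
set_option linter.unusedVariables false

lemma calc_helper (H1 H2 Hsel En : ℝ≥0∞) {ka fs es R₁ R τ : ℝ}
    (hka : 0 < ka) (hfs : 0 < fs) (hes : 0 < es) (hR₁ : 0 < R₁) (hR₁R : R₁ ≤ R)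
    (hτ : 0 < τ) (hsel : min H1 H2 ≤ Hsel)
    (hcont : Hsel ≤ ENNReal.ofReal (es / (ka / fs * R₁ ^ (-τ))) * En) :
    ENNReal.ofReal (ka / fs / es) * (min H1 H2 / ENNReal.ofReal (R ^ τ)) ≤ En := by
  have hRτ : 0 < R₁ ^ τ := Real.rpow_pos_of_pos hR₁ _
  have hRnegτ : R₁ ^ (-τ) = (R₁ ^ τ)⁻¹ := Real.rpow_neg hR₁.le _
  have hc'0 : 0 < ka / fs * R₁ ^ (-τ) := by
    rw [hRnegτ]; positivity
  -- key1
  have key1 : ENNReal.ofReal (ka / fs * R₁ ^ (-τ) / es) * Hsel ≤ En := by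
    calc ENNReal.ofReal (ka / fs * R₁ ^ (-τ) / es) * Hsel
        ≤ ENNReal.ofReal (ka / fs * R₁ ^ (-τ) / es) *
          (ENNReal.ofReal (es / (ka / fs * R₁ ^ (-τ))) * En) := mul_le_mul_right hcont _
      _ = ENNReal.ofReal (ka / fs * R₁ ^ (-τ) / es * (es / (ka / fs * R₁ ^ (-τ)))) * En := by
          rw [ENNReal.ofReal_mul (by positivity), mul_assoc]
      _ = En := by
          rw [show ka / fs * R₁ ^ (-τ) / es * (es / (ka / fs * R₁ ^ (-τ))) = 1 by
            field_simp, ENNReal.ofReal_one, one_mul]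
  have hinvR : (ENNReal.ofReal (R ^ τ))⁻¹ ≤ ENNReal.ofReal ((R₁ ^ τ)⁻¹) := by
    rw [ENNReal.ofReal_inv_of_pos hRτ]
    exact ENNReal.inv_le_inv'
      (ENNReal.ofReal_le_ofReal (Real.rpow_le_rpow hR₁.le hR₁R hτ.le))
  calc ENNReal.ofReal (ka / fs / es) * (min H1 H2 / ENNReal.ofReal (R ^ τ))
      ≤ ENNReal.ofReal (ka / fs / es) * (Hsel * ENNReal.ofReal ((R₁ ^ τ)⁻¹)) := by
        refine mul_le_mul_right ?_ _
        rw [div_eq_mul_inv]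
        exact mul_le_mul' hsel hinvR
    _ = ENNReal.ofReal (ka / fs / es * (R₁ ^ τ)⁻¹) * Hsel := by
        rw [ENNReal.ofReal_mul (by positivity)]
        ring
    _ = ENNReal.ofReal (ka / fs * R₁ ^ (-τ) / es) * Hsel := by
        rw [hRnegτ]
        ring_nf
    _ ≤ En := key1

end BCap

open MeasureTheory Metric Set BCap
open scoped ENNReal

set_option maxHeartbeats 1000000 in
theorem besov_capacity_loewner_lower_bound
    {Z : Type*} [MetricSpace Z] [CompactSpace Z] [MeasurableSpace Z] [BorelSpace Z]
    (ν : Measure Z) (Q CA s p θ : ℝ)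
    (hdiam0 : 0 < Metric.diam (Set.univ : Set Z))
    (hdiam1 : Metric.diam (Set.univ : Set Z) < 1)
    (hQ : 0 < Q) (hreg : IsAhlforsRegular ν Q CA)
    (hs0 : 0 < s) (hsQ : s < Q)
    (hp : max 1 (Q - s) < p) (hθ : (Q - s) / p < θ) (hθ1 : θ < 1) :
    ∃ c > 0, ∀ (x₀ : Z) (R : ℝ) (E F : Set Z), 0 < R →
      IsCompact E → IsCompact F → Disjoint E F →
      E ⊆ ball x₀ R → F ⊆ ball x₀ R →
      ENNReal.ofReal c *
          (min (hausdorffContent s E) (hausdorffContent s F) /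
            ENNReal.ofReal (R ^ (s - Q + θ * p))) ≤
        besovCapacity ν θ p E F := by
  classical
  have hCA : 0 < CA := lt_of_lt_of_le zero_lt_one hreg.1
  have hp1 : 1 < p := lt_of_le_of_lt (le_max_left _ _) hp
  have hp0 : (0 : ℝ) < p := by linarith
  have hσ : 0 < s + θ * p - Q := by
    have h1 := (div_lt_iff₀ hp0).1 hθ
    linarith
  have hθp : 0 < θ * p := by linarith
  have hτ : (0 : ℝ) < s - Q + θ * p := by linarith
  haveI hfin : IsFiniteMeasure ν := ⟨meas_univ_lt_top hreg hdiam0⟩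
  haveI : Nonempty Z := nonempty_of_diam_pos hdiam0
  set D := Metric.diam (Set.univ : Set Z) with hDdef
  have hka : 0 < kap CA Q s p θ := kap_pos hCA hp0 hσ
  have h4s : (0 : ℝ) < 4 ^ s := Real.rpow_pos_of_pos (by norm_num) _
  have h8s : (0 : ℝ) < 8 ^ s := Real.rpow_pos_of_pos (by norm_num) _
  refine ⟨kap CA Q s p θ / 4 ^ s / 8 ^ s, by positivity, ?_⟩
  intro x₀ R E F hR hEc hFc hEF hER hFR
  rw [besovCapacity]
  refine le_iInf fun u => le_iInf fun hu => le_iInf fun hUex => le_iInf fun hVex => ?_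
  obtain ⟨U, hUopen, hEU, hU1⟩ := hUex
  obtain ⟨V, hVopen, hFV, hV0⟩ := hVex
  have hu_int : Integrable u ν := by
    refine hu.1.integrable ?_
    rw [show (1 : ℝ≥0∞) = ENNReal.ofReal 1 by simp]
    exact ENNReal.ofReal_le_ofReal hp1.le
  have hu_aem : AEMeasurable u ν := hu.1.aestronglyMeasurable.aemeasurable
  set R₁ := min R (2 * D) with hR₁def
  have hR₁ : 0 < R₁ := lt_min hR (by linarith)
  have hR₁D : R₁ ≤ 2 * D := min_le_right _ _
  have hR₁R : R₁ ≤ R := min_le_left _ _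
  have hdist : ∀ x ∈ ball x₀ R, dist x x₀ < R₁ := by
    intro x hx
    refine lt_min (mem_ball.1 hx) ?_
    have := dist_le_D x x₀
    linarith
  have hexp : ∀ ρ : ℝ, kap CA Q s p θ / 4 ^ s * R₁ ^ (-(s - Q + θ * p)) * ρ ^ s
      = kap CA Q s p θ / 4 ^ s * ρ ^ s * R₁ ^ (Q - θ * p - s) := by
    intro ρ
    rw [show Q - θ * p - s = -(s - Q + θ * p) from by ring]
    ring
  have hc''0 : 0 < kap CA Q s p θ / 4 ^ s * R₁ ^ (-(s - Q + θ * p)) := by positivity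
  rcases le_or_gt (⨍ z in ball x₀ (2 * R₁), u z ∂ν) (1 / 2) with hcase | hcase
  · -- work with E and u
    have hper : ∀ x ∈ E, ∃ ρ : ℝ, 0 < ρ ∧ ρ ≤ 4 * R₁ ∧
        ENNReal.ofReal (kap CA Q s p θ / 4 ^ s * R₁ ^ (-(s - Q + θ * p)) * ρ ^ s)
          ≤ EN ν θ p u (ball x ρ) := by
      intro x hx
      obtain ⟨ρ, h1, h2, h3⟩ := telescope hreg hQ hdiam0 hp1 hθp hσ hs0 hu_int hu_aem
        hR₁ hR₁D (hdist x (hER hx)) hUopen (hEU hx) hU1 hcase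
      refine ⟨ρ, h1, h2, ?_⟩
      rw [hexp ρ]
      exact h3
    have hcont := content_bound (ν := ν) (p := p) (θ := θ) hs0 hc''0 hper
    exact calc_helper _ _ _ _ hka h4s h8s hR₁ hR₁R hτ (min_le_left _ _) hcont
  · -- work with F and w = 1 - u
    set w : Z → ℝ := fun z => 1 - u z with hw
    have hw_int : Integrable w ν := (integrable_const 1).sub hu_int
    have hw_aem : AEMeasurable w ν := aemeasurable_const.sub hu_aem
    have hball0 : ν (ball x₀ (2 * R₁)) ≠ 0 :=
      ball_pos hreg hQ hdiam0 x₀ (by linarith) (by linarith)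
    have ht : 0 < (ν (ball x₀ (2 * R₁))).toReal :=
      ENNReal.toReal_pos hball0 (measure_ne_top _ _)
    have hmw : (⨍ z in ball x₀ (2 * R₁), w z ∂ν) ≤ 1 / 2 := by
      have havg : (⨍ z in ball x₀ (2 * R₁), w z ∂ν)
          = 1 - ⨍ z in ball x₀ (2 * R₁), u z ∂ν := by
        rw [setAverage_eq, setAverage_eq, smul_eq_mul, smul_eq_mul, hw]
        rw [integral_sub (integrable_const 1) hu_int.integrableOn, setIntegral_const]
        simp only [smul_eq_mul, mul_one]
        have ht' : ν.real (ball x₀ (2 * R₁)) ≠ 0 := ht.ne'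
        field_simp
      rw [havg]
      linarith
    have hw1 : ∀ y ∈ V, 1 ≤ w y := by
      intro y hy
      have := hV0 y hy
      simp only [hw]
      linarith
    have hper : ∀ x ∈ F, ∃ ρ : ℝ, 0 < ρ ∧ ρ ≤ 4 * R₁ ∧
        ENNReal.ofReal (kap CA Q s p θ / 4 ^ s * R₁ ^ (-(s - Q + θ * p)) * ρ ^ s)
          ≤ EN ν θ p w (ball x ρ) := by
      intro x hx
      obtain ⟨ρ, h1, h2, h3⟩ := telescope hreg hQ hdiam0 hp1 hθp hσ hs0 hw_int hw_aem
        hR₁ hR₁D (hdist x (hFR hx)) hVopen (hFV hx) hw1 hmw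
      refine ⟨ρ, h1, h2, ?_⟩
      rw [hexp ρ]
      exact h3
    have hcont := content_bound (ν := ν) (p := p) (θ := θ) hs0 hc''0 hper
    rw [hw, besovEnergy_one_sub] at hcont
    exact calc_helper _ _ _ _ hka h4s h8s hR₁ hR₁R hτ (min_le_right _ _) hcont
end

section
/- Let Z and W be compact metric spaces with Z connected (and each with at least two points), and let φ: Z → W be a homeomorphism. Suppose φ is uniformly locally quasisymmetric: there exist r₀ > 0 and a continuous monotone increasing function η: [0,∞) → [0,∞) with η(0) = 0 and η(t) > 0 for t > 0 such that for every triple of distinct points x, y, z ∈ Z with diam{x,y,z} ≤ r₀, one has d_W(φ(x),φ(y))/d_W(φ(x),φ(z)) ≤ η(d_Z(x,y)/d_Z(x,z)). Then φ is globally quasisymmetric; in fact there is κ > 0 such that d_W(φ(x),φ(y)) ≥ κ whenever d_Z(x,y) ≥ r₀/4, and φ is η̂-quasisymmetric with gauge η̂(t) = max{ η(t), (diam(W)/κ)·η(t), (diam(W)/κ)·η((2 diam(Z)/r₀)·t), (diam(W)/(κ·η(r₀/(2 diam(Z)))))·η(t) }. -/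
/-!
Triples of diameter at most `r₀` are controlled by `η` directly. A triple `x, y, z` of larger
diameter has `d(x, y) > r₀/2` or `d(x, z) > r₀/2`. By connectedness of `Z` there are points `w` at
distance exactly `r₀/4` or `r₀/2` from `x`, and replacing a long side by `xw` gives a triple of
diameter at most `r₀` to which `η` applies. Since `φ⁻¹` is uniformly continuous, pairs at distance
at least `r₀/4` have images at distance at least some `κ > 0`, and all distances in `W` are at most
`diam W`; these two bounds turn the local estimate into a global one.
-/

open Metric Set

section

variable {Z W : Type*} [MetricSpace Z] [MetricSpace W]

def LocallyQuasisymmetricWith (r₀ : ℝ) (η : ℝ → ℝ) (φ : Z → W) : Prop :=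
  ∀ x y z : Z, x ≠ y → x ≠ z → y ≠ z → diam ({x, y, z} : Set Z) ≤ r₀ →
    dist (φ x) (φ y) / dist (φ x) (φ z) ≤ η (dist x y / dist x z)

theorem dist_le_diam_univ [BoundedSpace Z] (x y : Z) : dist x y ≤ diam (univ : Set Z) :=
  dist_le_diam_of_mem (Bornology.isBounded_univ.2 ‹_›) trivial trivial

theorem diam_triple_le {x y z : Z} {r : ℝ} (hxy : dist x y ≤ r) (hxz : dist x z ≤ r)
    (hyz : dist y z ≤ r) : diam ({x, y, z} : Set Z) ≤ r := by
  rw [diam_triple]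
  exact max_le (max_le hxy hxz) hyz

theorem half_lt_dist_or_half_lt_dist_of_lt_diam_triple {x y z : Z} {r : ℝ}
    (h : r < diam ({x, y, z} : Set Z)) : r / 2 < dist x y ∨ r / 2 < dist x z := by
  by_contra! ⟨hxy, hxz⟩
  have := dist_nonneg (x := x) (y := y)
  exact h.not_ge (diam_triple_le (by linarith) (by linarith)
    (by linarith [dist_triangle_left y z x]))

theorem exists_dist_eq_of_le_dist [ConnectedSpace Z] {x z : Z} {r : ℝ} (h₀ : 0 ≤ r)
    (hr : r ≤ dist x z) : ∃ w, dist x w = r :=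
  intermediate_value_univ x z (continuous_const.dist continuous_id) ⟨by simpa using h₀, hr⟩

theorem Homeomorph.exists_pos_le_dist_of_le_dist [CompactSpace W] (φ : Z ≃ₜ W) {δ : ℝ}
    (hδ : 0 < δ) : ∃ κ > 0, ∀ x y, δ ≤ dist x y → κ ≤ dist (φ x) (φ y) := by
  obtain ⟨κ, hκ, hφ⟩ := Metric.uniformContinuous_iff.1
    (CompactSpace.uniformContinuous_of_continuous φ.symm.continuous) δ hδ
  refine ⟨κ, hκ, fun x y hxy => not_lt.1 fun hlt => ?_⟩
  have := hφ hlt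
  simp only [Homeomorph.symm_apply_apply] at this
  linarith

theorem div_le_div_mul_of_le_mul {a b A κ e : ℝ} (ha : a ≤ A) (hA : 0 ≤ A) (hb : 0 ≤ b)
    (hκ : 0 < κ) (hκb : κ ≤ b * e) : a / b ≤ A / κ * e := by
  have hb : 0 < b := hb.lt_of_ne <| by rintro rfl; linarith [zero_mul e]
  rw [div_le_iff₀ hb]
  calc a ≤ A / κ * κ := by rwa [div_mul_cancel₀ _ hκ.ne']
    _ ≤ A / κ * (b * e) := by gcongr
    _ = A / κ * e * b := by ring

namespace LocallyQuasisymmetricWith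

variable {φ : Z → W} {r₀ κ : ℝ} {η : ℝ → ℝ} {x y z : Z}

theorem dist_div_dist_le_of_diam_le (h : LocallyQuasisymmetricWith r₀ η φ) (hxy : x ≠ y)
    (hxz : x ≠ z) (hyz : y ≠ z) (hd : diam ({x, y, z} : Set Z) ≤ r₀) :
    dist (φ x) (φ z) / dist (φ x) (φ y) ≤ η (dist x z / dist x y) :=
  h x z y hxz hxy hyz.symm (by rwa [pair_comm])

theorem dist_div_dist_le_of_dist_lt [ConnectedSpace Z] [BoundedSpace W]
    (h : LocallyQuasisymmetricWith r₀ η φ) (hφ : Function.Injective φ)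
    (hη : MonotoneOn η (Ici 0)) (hr₀ : 0 < r₀) (hκ : 0 < κ)
    (hsep : ∀ x y, r₀ / 4 ≤ dist x y → κ ≤ dist (φ x) (φ y)) (hxy : x ≠ y)
    (hxy₄ : dist x y < r₀ / 4) (hxz₄ : r₀ / 4 ≤ dist x z) :
    dist (φ x) (φ z) / dist (φ x) (φ y) ≤
      diam (univ : Set W) / κ * η (dist x z / dist x y) := by
  obtain ⟨w, hw⟩ := exists_dist_eq_of_le_dist (by positivity) hxz₄
  have hxw : x ≠ w := by rintro rfl; rw [dist_self] at hw; linarith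
  have hwy : w ≠ y := by rintro rfl; linarith
  have hlocal := h x w y hxw hxy hwy
    (diam_triple_le (by linarith) (by linarith) (by linarith [dist_triangle_left w y x]))
  have hmono : η (dist x w / dist x y) ≤ η (dist x z / dist x y) :=
    hη (mem_Ici.2 (by positivity)) (mem_Ici.2 (by positivity))
      (div_le_div_of_nonneg_right (hw.trans_le hxz₄) dist_nonneg)
  refine div_le_div_mul_of_le_mul (dist_le_diam_univ _ _) diam_nonneg dist_nonneg hκ ?_
  calc κ ≤ dist (φ x) (φ w) := hsep x w hw.ge
    _ ≤ dist (φ x) (φ y) * η (dist x w / dist x y) :=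
      (div_le_iff₀' (dist_pos.2 (hφ.ne hxy))).1 hlocal
    _ ≤ dist (φ x) (φ y) * η (dist x z / dist x y) := by gcongr

theorem dist_div_dist_le_of_dist_lt_half [ConnectedSpace Z] [BoundedSpace Z] [BoundedSpace W]
    (h : LocallyQuasisymmetricWith r₀ η φ) (hη : MonotoneOn η (Ici 0))
    (hηpos : ∀ t, 0 < t → 0 < η t) (hr₀ : 0 < r₀) (hκ : 0 < κ)
    (hsep : ∀ x y, r₀ / 4 ≤ dist x y → κ ≤ dist (φ x) (φ y)) (hxz : x ≠ z)
    (hxz₂ : dist x z < r₀ / 2) (hxy₂ : r₀ / 2 ≤ dist x y) :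
    dist (φ x) (φ z) / dist (φ x) (φ y) ≤
      diam (univ : Set W) / κ *
        η (2 * diam (univ : Set Z) / r₀ * (dist x z / dist x y)) := by
  obtain ⟨w, hw⟩ := exists_dist_eq_of_le_dist (by positivity) hxy₂
  have hxw : x ≠ w := by rintro rfl; rw [dist_self] at hw; linarith
  have hzw : z ≠ w := by rintro rfl; linarith
  have hdxz := dist_pos.2 hxz
  have hdxy : 0 < dist x y := by linarith
  have hlocal := h x z w hxz hxw hzw
    (diam_triple_le (by linarith) (by linarith) (by linarith [dist_triangle_left z w x]))
  have harg : dist x z / dist x w ≤ 2 * diam (univ : Set Z) / r₀ * (dist x z / dist x y) :=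
    calc dist x z / dist x w = 2 / r₀ * dist x z := by rw [hw]; ring
      _ ≤ 2 / r₀ * dist x z * (diam (univ : Set Z) / dist x y) :=
        le_mul_of_one_le_right (by positivity) ((one_le_div hdxy).2 (dist_le_diam_univ x y))
      _ = 2 * diam (univ : Set Z) / r₀ * (dist x z / dist x y) := by ring
  have hηarg : η (dist x z / dist x w) ≤
      η (2 * diam (univ : Set Z) / r₀ * (dist x z / dist x y)) :=
    hη (mem_Ici.2 (by positivity)) (mem_Ici.2 (by positivity)) harg
  have hηw : 0 < η (dist x z / dist x w) := hηpos _ (by rw [hw]; positivity)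
  have hzfar : dist (φ x) (φ z) ≤
      diam (univ : Set W) * η (2 * diam (univ : Set Z) / r₀ * (dist x z / dist x y)) :=
    calc dist (φ x) (φ z) ≤ η (dist x z / dist x w) * dist (φ x) (φ w) :=
          (div_le_iff₀ (hκ.trans_le (hsep x w (by linarith)))).1 hlocal
      _ ≤ η (2 * diam (univ : Set Z) / r₀ * (dist x z / dist x y)) * diam (univ : Set W) :=
          mul_le_mul hηarg (dist_le_diam_univ _ _) dist_nonneg (hηw.le.trans hηarg)
      _ = _ := mul_comm _ _
  calc dist (φ x) (φ z) / dist (φ x) (φ y) ≤ dist (φ x) (φ z) / κ :=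
        div_le_div_of_nonneg_left dist_nonneg hκ (hsep x y (by linarith))
    _ ≤ _ := by rw [div_mul_eq_mul_div]; gcongr

end LocallyQuasisymmetricWith

theorem dist_div_dist_le_of_le_dist [BoundedSpace Z] [BoundedSpace W] {φ : Z → W} {r₀ κ : ℝ}
    {η : ℝ → ℝ} {x y z : Z} (hη : MonotoneOn η (Ici 0)) (hηpos : ∀ t, 0 < t → 0 < η t)
    (hr₀ : 0 < r₀) (hκ : 0 < κ) (hsep : ∀ x y, r₀ / 4 ≤ dist x y → κ ≤ dist (φ x) (φ y))
    (hxy₄ : r₀ / 4 ≤ dist x y) (hxz₂ : r₀ / 2 ≤ dist x z) :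
    dist (φ x) (φ z) / dist (φ x) (φ y) ≤
      diam (univ : Set W) / (κ * η (r₀ / (2 * diam (univ : Set Z)))) *
        η (dist x z / dist x y) := by
  have hdxy : 0 < dist x y := by linarith
  have hDZ := dist_le_diam_univ x y
  have hc : 0 < r₀ / (2 * diam (univ : Set Z)) := by
    have := hdxy.trans_le hDZ
    positivity
  have hct : r₀ / (2 * diam (univ : Set Z)) ≤ dist x z / dist x y := by
    rw [← div_div]
    exact div_le_div₀ dist_nonneg hxz₂ hdxy hDZ
  exact div_le_div_mul_of_le_mul (dist_le_diam_univ _ _) diam_nonneg dist_nonneg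
    (mul_pos hκ (hηpos _ hc)) (mul_le_mul (hsep x y hxy₄)
      (hη hc.le (mem_Ici.2 (by positivity)) hct) (hηpos _ hc).le dist_nonneg)

end

theorem uniformly_locally_quasisymmetric_implies_quasisymmetric_general
    {Z W : Type*} [MetricSpace Z] [CompactSpace Z] [ConnectedSpace Z]
    [MetricSpace W] [CompactSpace W]
    (φ : Z ≃ₜ W) (r₀ : ℝ) (hr₀ : 0 < r₀) (η : ℝ → ℝ)
    (hηm : MonotoneOn η (Ici 0))
    (hηpos : ∀ t, 0 < t → 0 < η t)
    (hloc : ∀ x y z : Z, x ≠ y → x ≠ z → y ≠ z →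
      Metric.diam ({x, y, z} : Set Z) ≤ r₀ →
      dist (φ x) (φ y) / dist (φ x) (φ z) ≤ η (dist x y / dist x z)) :
    ∃ κ > 0, (∀ x y : Z, r₀ / 4 ≤ dist x y → κ ≤ dist (φ x) (φ y)) ∧
      ∀ x y z : Z, x ≠ y → x ≠ z → y ≠ z →
        dist (φ x) (φ z) / dist (φ x) (φ y) ≤
          max (max (η (dist x z / dist x y))
                   (Metric.diam (Set.univ : Set W) / κ * η (dist x z / dist x y)))
              (max (Metric.diam (Set.univ : Set W) / κ *
                      η (2 * Metric.diam (Set.univ : Set Z) / r₀ * (dist x z / dist x y)))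
                   (Metric.diam (Set.univ : Set W) /
                      (κ * η (r₀ / (2 * Metric.diam (Set.univ : Set Z)))) *
                      η (dist x z / dist x y))) := by
  obtain ⟨κ, hκ, hsep⟩ := φ.exists_pos_le_dist_of_le_dist (by positivity : 0 < r₀ / 4)
  have hφ : LocallyQuasisymmetricWith r₀ η φ := hloc
  refine ⟨κ, hκ, hsep, fun x y z hxy hxz hyz => ?_⟩
  by_cases hsmall : diam ({x, y, z} : Set Z) ≤ r₀
  · exact le_max_of_le_left (le_max_of_le_left
      (hφ.dist_div_dist_le_of_diam_le hxy hxz hyz hsmall))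
  have hlong := half_lt_dist_or_half_lt_dist_of_lt_diam_triple (not_le.1 hsmall)
  rcases lt_or_ge (dist x y) (r₀ / 4) with hxy₄ | hxy₄
  · have hxz₄ : r₀ / 4 ≤ dist x z := by rcases hlong with h | h <;> linarith
    exact le_max_of_le_left (le_max_of_le_right
      (hφ.dist_div_dist_le_of_dist_lt φ.injective hηm hr₀ hκ hsep hxy hxy₄ hxz₄))
  rcases le_or_gt (r₀ / 2) (dist x z) with hxz₂ | hxz₂
  · exact le_max_of_le_right (le_max_of_le_right
      (dist_div_dist_le_of_le_dist hηm hηpos hr₀ hκ hsep hxy₄ hxz₂))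
  · have hxy₂ : r₀ / 2 ≤ dist x y := by rcases hlong with h | h <;> linarith
    exact le_max_of_le_right (le_max_of_le_left
      (hφ.dist_div_dist_le_of_dist_lt_half hηm hηpos hr₀ hκ hsep hxz hxz₂ hxy₂))

theorem uniformly_locally_quasisymmetric_implies_quasisymmetric
    {Z W : Type*} [MetricSpace Z] [CompactSpace Z] [ConnectedSpace Z] [Nontrivial Z]
    [MetricSpace W] [CompactSpace W] [Nontrivial W]
    (φ : Z ≃ₜ W) (r₀ : ℝ) (hr₀ : 0 < r₀) (η : ℝ → ℝ)
    (hηc : ContinuousOn η (Ici 0)) (hηm : MonotoneOn η (Ici 0)) (hη0 : η 0 = 0)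
    (hηpos : ∀ t, 0 < t → 0 < η t)
    (hloc : ∀ x y z : Z, x ≠ y → x ≠ z → y ≠ z →
      Metric.diam ({x, y, z} : Set Z) ≤ r₀ →
      dist (φ x) (φ y) / dist (φ x) (φ z) ≤ η (dist x y / dist x z)) :
    ∃ κ > 0, (∀ x y : Z, r₀ / 4 ≤ dist x y → κ ≤ dist (φ x) (φ y)) ∧
      ∀ x y z : Z, x ≠ y → x ≠ z → y ≠ z →
        dist (φ x) (φ z) / dist (φ x) (φ y) ≤
          max (max (η (dist x z / dist x y))
                   (Metric.diam (Set.univ : Set W) / κ * η (dist x z / dist x y)))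
              (max (Metric.diam (Set.univ : Set W) / κ *
                      η (2 * Metric.diam (Set.univ : Set Z) / r₀ * (dist x z / dist x y)))
                   (Metric.diam (Set.univ : Set W) /
                      (κ * η (r₀ / (2 * Metric.diam (Set.univ : Set Z)))) *
                      η (dist x z / dist x y))) :=
  uniformly_locally_quasisymmetric_implies_quasisymmetric_general φ r₀ hr₀ η hηm hηpos hloc
end
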